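/- arXiv:1602.04128 — 4 statements merged into one kernel-verified Lean document; each statement's English description precedes it below -/
import Mathlib

section
/- Let ε > 0 and let H be a real Hilbert space. Let g_1, g_2, … ∈ H with ‖g_t‖ ≤ 1 for all t, and define predictions recursively by w_t = (1/t) · (ε + Σ_{i=1}^{t−1} ⟨g_i, w_i⟩) · Σ_{i=1}^{t−1} g_i (so in particular w_1 = 0). Then for every integer T ≥ 1 and every u ∈ H, Σ_{t=1}^T ⟨g_t, u⟩ − Σ_{t=1}^T ⟨g_t, w_t⟩ ≤ ‖u‖ · √( T · ln(1 + 24·T²·‖u‖²/ε²) ) + ε · (1 − 1/(e·√(π·T))). -/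
open scoped RealInnerProductSpace

section KTAux

open Set Real


/-- Helper: if `f a ≥ 0` and `f` has nonnegative derivative on `Ico a b`, then `f ≥ 0` there. -/
lemma kt_nonneg_of_deriv (a b : ℝ) (f f' : ℝ → ℝ) (h0 : 0 ≤ f a)
    (hd : ∀ x ∈ Set.Ico a b, HasDerivAt f (f' x) x)
    (hp : ∀ x ∈ Set.Ico a b, 0 ≤ f' x) {x : ℝ} (hx : x ∈ Set.Ico a b) : 0 ≤ f x := by
  have hmono : MonotoneOn f (Set.Ico a b) := by
    apply monotoneOn_of_deriv_nonneg (convex_Ico a b)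
    · exact fun y hy => (hd y hy).continuousAt.continuousWithinAt
    · intro y hy
      rw [interior_Ico] at hy
      exact (hd y (Ioo_subset_Ico_self hy)).differentiableAt.differentiableWithinAt
    · intro y hy
      rw [interior_Ico] at hy
      rw [(hd y (Ioo_subset_Ico_self hy)).deriv]
      exact hp y (Ioo_subset_Ico_self hy)
  have ha : a ∈ Set.Ico a b := ⟨le_refl _, lt_of_le_of_lt hx.1 hx.2⟩
  exact h0.trans (hmono ha hx hx.1)

lemma kt_hasDerivAt_log_add (c x : ℝ) (h : 0 < c + x) :
    HasDerivAt (fun x : ℝ => Real.log (c + x)) (c + x)⁻¹ x := by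
  simpa [Function.comp_def] using (Real.hasDerivAt_log h.ne').comp x ((hasDerivAt_id x).const_add c)

lemma kt_hasDerivAt_log_sub (c x : ℝ) (h : 0 < c - x) :
    HasDerivAt (fun x : ℝ => Real.log (c - x)) (-(c - x)⁻¹) x := by
  have h1 : HasDerivAt (fun x : ℝ => c - x) (-1) x := by
    exact (hasDerivAt_id' x).const_sub c
  simpa [Function.comp_def] using (Real.hasDerivAt_log h.ne').comp x h1

/-- `2y ≤ log(1+y) - log(1-y)` for `y ∈ [0,1)`. -/
lemma kt_two_mul_le_log (y : ℝ) (h0 : 0 ≤ y) (h1 : y < 1) :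
    2 * y ≤ Real.log (1 + y) - Real.log (1 - y) := by
  have key := kt_nonneg_of_deriv 0 1
      (fun x => Real.log (1 + x) - Real.log (1 - x) - 2 * x)
      (fun x => (1 + x)⁻¹ + (1 - x)⁻¹ - 2) (by simp)
      (fun x hx => by
        have hx0 : (0:ℝ) < 1 + x := by nlinarith [hx.1, hx.2]
        have hx1 : (0:ℝ) < 1 - x := by nlinarith [hx.2]
        have d := ((kt_hasDerivAt_log_add 1 x hx0).sub (kt_hasDerivAt_log_sub 1 x hx1)).sub
          ((hasDerivAt_id x).const_mul 2)
        refine d.congr_deriv ?_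
        ring)
      (fun x hx => by
        have hx0 : (0:ℝ) < 1 + x := by nlinarith [hx.1, hx.2]
        have hx1 : (0:ℝ) < 1 - x := by nlinarith [hx.2]
        have e1 : (1 + x) * (1 + x)⁻¹ = 1 := mul_inv_cancel₀ hx0.ne'
        have e2 : (1 - x) * (1 - x)⁻¹ = 1 := mul_inv_cancel₀ hx1.ne'
        nlinarith [inv_nonneg.2 hx0.le, inv_nonneg.2 hx1.le, hx.1,
          mul_nonneg (mul_nonneg hx.1 hx.1) (inv_nonneg.2 hx0.le)])
      (x := y) ⟨h0, h1⟩
  linarith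

/-- Log of the (Stirling-style) KT potential. -/
noncomputable def kLA (t x : ℝ) : ℝ :=
  (t + x) / 2 * Real.log (t + x) + (t - x) / 2 * Real.log (t - x) - t * Real.log t

lemma kLA_neg (t x : ℝ) : kLA t (-x) = kLA t x := by
  unfold kLA
  have h1 : t + -x = t - x := by ring
  have h2 : t - -x = t + x := by ring
  rw [h1, h2]; ring

lemma kLA_zero (t : ℝ) : kLA t 0 = 0 := by
  unfold kLA
  rw [add_zero, sub_zero]
  ring

lemma kt_hasDerivAt_kLA (t x : ℝ) (h1 : 0 < t + x) (h2 : 0 < t - x) :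
    HasDerivAt (kLA t) ((Real.log (t + x) - Real.log (t - x)) / 2) x := by
  have dA : HasDerivAt (fun x : ℝ => (t + x) / 2 * Real.log (t + x))
      (1 / 2 * Real.log (t + x) + (t + x) / 2 * (t + x)⁻¹) x := by
    have da : HasDerivAt (fun x : ℝ => (t + x) / 2) (1 / 2) x := by
      simpa using (((hasDerivAt_id x).const_add t).div_const 2)
    exact da.mul (kt_hasDerivAt_log_add t x h1)
  have dB : HasDerivAt (fun x : ℝ => (t - x) / 2 * Real.log (t - x))
      (-1 / 2 * Real.log (t - x) + (t - x) / 2 * (-(t - x)⁻¹)) x := by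
    have db : HasDerivAt (fun x : ℝ => (t - x) / 2) (-1 / 2) x := by
      simpa using (((hasDerivAt_id x).const_sub t).div_const 2)
    exact db.mul (kt_hasDerivAt_log_sub t x h2)
  have d := (dA.add dB).sub_const (t * Real.log t)
  have e1 : (t + x) / 2 * (t + x)⁻¹ = 1 / 2 := by
    field_simp
  have e2 : (t - x) / 2 * (-(t - x)⁻¹) = -1 / 2 := by
    field_simp
  refine d.congr_deriv ?_
  rw [e1, e2]
  ring

/-- Continuity of `x ↦ kLA t x` on `[0, t]` (uses `x log x` continuity at the endpoint). -/
lemma kt_continuousOn_kLA (t : ℝ) (ht : 0 < t) : ContinuousOn (kLA t) (Set.Icc 0 t) := by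
  unfold kLA
  apply ContinuousOn.sub
  apply ContinuousOn.add
  · apply ContinuousOn.mul
    · fun_prop
    · apply ContinuousOn.log (by fun_prop)
      intro x hx
      nlinarith [hx.1]
  · have : ∀ x : ℝ, (t - x) / 2 * Real.log (t - x) = (1 / 2) * ((t - x) * Real.log (t - x)) := by
      intro x; ring
    simp only [this]
    apply ContinuousOn.mul continuousOn_const
    exact (Real.continuous_mul_log.comp (by fun_prop : Continuous fun x : ℝ => t - x)).continuousOn
  · fun_prop

/-- Monotonicity of `kLA t` on `[0, t]`. -/
lemma kt_kLA_mono (t : ℝ) (ht : 0 < t) : MonotoneOn (kLA t) (Set.Icc 0 t) := by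
  apply monotoneOn_of_deriv_nonneg (convex_Icc 0 t) (kt_continuousOn_kLA t ht)
  · intro x hx
    rw [interior_Icc] at hx
    have h1 : 0 < t + x := by nlinarith [hx.1]
    have h2 : 0 < t - x := by nlinarith [hx.2]
    exact (kt_hasDerivAt_kLA t x h1 h2).differentiableAt.differentiableWithinAt
  · intro x hx
    rw [interior_Icc] at hx
    have h1 : 0 < t + x := by nlinarith [hx.1]
    have h2 : 0 < t - x := by nlinarith [hx.2]
    rw [(kt_hasDerivAt_kLA t x h1 h2).deriv]
    have hlog : Real.log (t - x) ≤ Real.log (t + x) :=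
      Real.log_le_log h2 (by linarith [hx.1])
    linarith

/-- Pinsker-type bound: `x²/(2t) ≤ kLA t x` on `[0, t]`. -/
lemma kt_kLA_ge (t x : ℝ) (ht : 0 < t) (hx0 : 0 ≤ x) (hxt : x ≤ t) :
    x ^ 2 / (2 * t) ≤ kLA t x := by
  rcases eq_or_lt_of_le hxt with h | h
  · rw [h]
    have e : kLA t t = t * Real.log 2 := by
      unfold kLA
      rw [sub_self, show t + t = 2 * t by ring, Real.log_mul two_ne_zero ht.ne']
      simp [Real.log_zero]
      ring
    rw [e]
    have h2 : (1:ℝ)/2 ≤ Real.log 2 := by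
      have := Real.log_two_gt_d9
      linarith
    have e2 : t ^ 2 / (2 * t) = t / 2 := by
      field_simp
    rw [e2]
    nlinarith
  · have key := kt_nonneg_of_deriv 0 t (fun u => kLA t u - u ^ 2 / (2 * t))
      (fun u => (Real.log (t + u) - Real.log (t - u)) / 2 - u / t)
      (by simp [kLA_zero])
      (fun y hy => by
        have h1 : 0 < t + y := by nlinarith [hy.1]
        have h2 : 0 < t - y := by nlinarith [hy.2]
        have d2 : HasDerivAt (fun u : ℝ => u ^ 2 / (2 * t)) (y / t) y := by
          have := (hasDerivAt_pow 2 y).div_const (2 * t)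
          refine this.congr_deriv ?_
          field_simp
          ring
        exact (kt_hasDerivAt_kLA t y h1 h2).sub d2)
      (fun y hy => by
        have h1 : 0 < t + y := by nlinarith [hy.1]
        have h2 : 0 < t - y := by nlinarith [hy.2]
        have hyt : y / t < 1 := by rw [div_lt_one ht]; exact hy.2
        have hlb := kt_two_mul_le_log (y / t) (div_nonneg hy.1 ht.le) hyt
        have e1 : Real.log (1 + y / t) = Real.log (t + y) - Real.log t := by
          rw [show 1 + y / t = (t + y) / t by field_simp, Real.log_div h1.ne' ht.ne']
        have e2 : Real.log (1 - y / t) = Real.log (t - y) - Real.log t := by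
          rw [show 1 - y / t = (t - y) / t by field_simp, Real.log_div h2.ne' ht.ne']
        rw [e1, e2] at hlb
        linarith)
      (x := x) ⟨hx0, h⟩
    linarith

/-- Key auxiliary: `2 artanh y + y log(1-y²) - 2y ≤ 0` on `[0,1)`. -/
lemma kt_f_aux (y : ℝ) (h0 : 0 ≤ y) (h1 : y < 1) :
    Real.log (1 + y) - Real.log (1 - y) + y * (Real.log (1 + y) + Real.log (1 - y)) - 2 * y ≤ 0 := by
  have key := kt_nonneg_of_deriv 0 1
      (fun x => -(Real.log (1 + x) - Real.log (1 - x) + x * (Real.log (1 + x) + Real.log (1 - x)) - 2 * x))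
      (fun x => -(Real.log (1 + x) + Real.log (1 - x)))
      (by norm_num)
      (fun x hx => by
        have hx0 : (0:ℝ) < 1 + x := by nlinarith [hx.1, hx.2]
        have hx1 : (0:ℝ) < 1 - x := by nlinarith [hx.2]
        have d1 := kt_hasDerivAt_log_add 1 x hx0
        have d2 := kt_hasDerivAt_log_sub 1 x hx1
        have d3 : HasDerivAt (fun x : ℝ => x * (Real.log (1 + x) + Real.log (1 - x)))
            (1 * (Real.log (1 + x) + Real.log (1 - x)) + x * ((1 + x)⁻¹ + (-(1 - x)⁻¹))) x :=
          (hasDerivAt_id x).mul (d1.add d2)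
        have d := (((d1.sub d2).add d3).sub ((hasDerivAt_id x).const_mul 2)).neg
        refine d.congr_deriv ?_
        have e1 : (1 + x) * (1 + x)⁻¹ = 1 := mul_inv_cancel₀ hx0.ne'
        have e2 : (1 - x) * (1 - x)⁻¹ = 1 := mul_inv_cancel₀ hx1.ne'
        field_simp
        ring)
      (fun x hx => by
        have hx0 : (0:ℝ) < 1 + x := by nlinarith [hx.1, hx.2]
        have hx1 : (0:ℝ) < 1 - x := by nlinarith [hx.2]
        have l1 : Real.log (1 + x) + Real.log (1 - x) ≤ 0 := by
          rw [← Real.log_mul hx0.ne' hx1.ne']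
          apply Real.log_nonpos (by nlinarith) (by nlinarith [sq_nonneg x])
        linarith)
      (x := y) ⟨h0, h1⟩
  linarith

/-- `M(x) ≤ 2` : `(x+1) log((x+1)/x) - (x-1) log((x-1)/x) ≤ 2` for `x ≥ 1`. -/
lemma kt_M_le_two (x : ℝ) (hx : 1 ≤ x) :
    (x + 1) * (Real.log (x + 1) - Real.log x) - (x - 1) * (Real.log (x - 1) - Real.log x) ≤ 2 := by
  rcases eq_or_lt_of_le hx with h | h
  · rw [← h]
    norm_num
    have := Real.log_two_lt_d9
    nlinarith
  · have hx0 : (0:ℝ) < x := by linarith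
    set y := 1 / x with hy
    have hy0 : 0 ≤ y := by positivity
    have hy1 : y < 1 := by rw [hy, div_lt_one hx0]; exact h
    have e1 : Real.log (x + 1) - Real.log x = Real.log (1 + y) := by
      rw [hy, one_add_div hx0.ne', Real.log_div (by linarith) hx0.ne']
    have e2 : Real.log (x - 1) - Real.log x = Real.log (1 - y) := by
      rw [hy, one_sub_div hx0.ne', Real.log_div (by linarith) hx0.ne']
    rw [e1, e2]
    have hF := kt_f_aux y hy0 hy1
    have hxF : x * (Real.log (1 + y) - Real.log (1 - y) + y * (Real.log (1 + y) + Real.log (1 - y)) - 2 * y) ≤ 0 :=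
      mul_nonpos_of_nonneg_of_nonpos hx0.le hF
    have expand : x * (Real.log (1 + y) - Real.log (1 - y) + y * (Real.log (1 + y) + Real.log (1 - y)) - 2 * y)
        = x * Real.log (1 + y) - x * Real.log (1 - y) + (Real.log (1 + y) + Real.log (1 - y)) - 2 := by
      rw [hy]
      field_simp
    rw [expand] at hxF
    linarith

/-- `N(t) ≥ 2` : `(2t-1)(log t - log(t-1)) ≥ 2` for `t ≥ 2`. -/
lemma kt_N_ge_two (t : ℝ) (ht : 2 ≤ t) :
    2 ≤ (2 * t - 1) * (Real.log t - Real.log (t - 1)) := by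
  have h3 : (0:ℝ) < 2 * t - 1 := by linarith
  set y := 1 / (2 * t - 1) with hy
  have hy0 : 0 ≤ y := by positivity
  have hy1 : y < 1 := by rw [hy, div_lt_one h3]; linarith
  have key := kt_two_mul_le_log y hy0 hy1
  have e1 : Real.log (1 + y) = Real.log (2 * t) - Real.log (2 * t - 1) := by
    rw [hy, one_add_div h3.ne', show 2 * t - 1 + 1 = 2 * t by ring,
      Real.log_div (by positivity : (2:ℝ)*t ≠ 0) h3.ne']
  have e2 : Real.log (1 - y) = Real.log (2 * (t - 1)) - Real.log (2 * t - 1) := by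
    rw [hy, one_sub_div h3.ne', show 2 * t - 1 - 1 = 2 * (t - 1) by ring,
      Real.log_div (by nlinarith : (2:ℝ)*(t-1) ≠ 0) h3.ne']
  have e3 : Real.log (2 * t) = Real.log 2 + Real.log t := by
    rw [Real.log_mul two_ne_zero (by linarith)]
  have e4 : Real.log (2 * (t - 1)) = Real.log 2 + Real.log (t - 1) := by
    rw [Real.log_mul two_ne_zero (by nlinarith)]
  rw [e1, e2, e3, e4] at key
  have key2 : 2 * y ≤ Real.log t - Real.log (t - 1) := by linarith
  have hprod : y * (2 * t - 1) = 1 := by rw [hy, one_div_mul_cancel h3.ne']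
  nlinarith [mul_le_mul_of_nonneg_right key2 h3.le, hprod]

/-- `n(x) = 2tx/(t²-x²) - (log(t+x)-log(t-x)) ≥ 0` on `[0,t)`. -/
lemma kt_slope_aux (t : ℝ) (ht : 0 < t) {x : ℝ} (hx0 : 0 ≤ x) (hxt : x < t) :
    0 ≤ 2 * t * x / (t ^ 2 - x ^ 2) - (Real.log (t + x) - Real.log (t - x)) := by
  have key := kt_nonneg_of_deriv 0 t
      (fun u => 2 * t * u / (t ^ 2 - u ^ 2) - (Real.log (t + u) - Real.log (t - u)))
      (fun u => (2 * t * (t ^ 2 - u ^ 2) - 2 * t * u * (0 - 2 * u)) / (t ^ 2 - u ^ 2) ^ 2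
        - ((t + u)⁻¹ + (t - u)⁻¹))
      (by simp)
      (fun u hu => by
        have h1 : 0 < t + u := by nlinarith [hu.1]
        have h2 : 0 < t - u := by nlinarith [hu.2]
        have hden : t ^ 2 - u ^ 2 ≠ 0 := by nlinarith
        have dnum : HasDerivAt (fun u : ℝ => 2 * t * u) (2 * t) u := by
          simpa using (hasDerivAt_id u).const_mul (2 * t)
        have dden : HasDerivAt (fun u : ℝ => t ^ 2 - u ^ 2) (0 - 2 * u) u := by
          have := (hasDerivAt_pow 2 u)
          exact ((hasDerivAt_const u (t ^ 2)).sub (hasDerivAt_pow 2 u)).congr_deriv (by norm_num)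
        have ddiv := dnum.div dden hden
        have dlog := (kt_hasDerivAt_log_add t u h1).sub (kt_hasDerivAt_log_sub t u h2)
        have := ddiv.sub dlog
        refine this.congr_deriv ?_
        ring)
      (fun u hu => by
        have h1 : 0 < t + u := by nlinarith [hu.1]
        have h2 : 0 < t - u := by nlinarith [hu.2]
        have hden : (0:ℝ) < t ^ 2 - u ^ 2 := by nlinarith
        have e : (2 * t * (t ^ 2 - u ^ 2) - 2 * t * u * (0 - 2 * u)) / (t ^ 2 - u ^ 2) ^ 2
            - ((t + u)⁻¹ + (t - u)⁻¹) = 4 * t * u ^ 2 / (t ^ 2 - u ^ 2) ^ 2 := by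
          rw [show t ^ 2 - u ^ 2 = (t + u) * (t - u) by ring] at hden ⊢
          field_simp
          ring
        rw [e]
        positivity)
      (x := x) ⟨hx0, hxt⟩
  linarith

/-- slope monotonicity: `m(x₁)/x₁ ≤ m(x₂)/x₂` in cross-multiplied form. -/
lemma kt_slope_mono (t : ℝ) (ht : 0 < t) {x₁ x₂ : ℝ} (h1 : 0 < x₁) (h12 : x₁ ≤ x₂) (h2 : x₂ < t) :
    (Real.log (t + x₁) - Real.log (t - x₁)) * x₂ ≤ (Real.log (t + x₂) - Real.log (t - x₂)) * x₁ := by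
  have key := kt_nonneg_of_deriv x₁ t
      (fun u => (Real.log (t + u) - Real.log (t - u)) * x₁
        - (Real.log (t + x₁) - Real.log (t - x₁)) * u)
      (fun u => ((t + u)⁻¹ + (t - u)⁻¹) * x₁ - (Real.log (t + x₁) - Real.log (t - x₁)))
      (by ring_nf; exact le_refl _)
      (fun u hu => by
        have hu1 : 0 < t + u := by nlinarith [hu.1]
        have hu2 : 0 < t - u := by nlinarith [hu.2]
        have dlog := (kt_hasDerivAt_log_add t u hu1).sub (kt_hasDerivAt_log_sub t u hu2)
        have d := (dlog.mul_const x₁).sub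
          ((hasDerivAt_id u).const_mul (Real.log (t + x₁) - Real.log (t - x₁)))
        refine d.congr_deriv ?_
        ring)
      (fun u hu => by
        have hx1t : x₁ < t := lt_of_le_of_lt h12 h2
        have hu1 : 0 < t + u := by nlinarith [hu.1, h1]
        have hu2 : 0 < t - u := by nlinarith [hu.2]
        have hden1 : (0:ℝ) < t ^ 2 - x₁ ^ 2 := by nlinarith
        have hden2 : (0:ℝ) < t ^ 2 - u ^ 2 := by nlinarith
        have hn := kt_slope_aux t ht h1.le hx1t
        have emul : ((t + u)⁻¹ + (t - u)⁻¹) * x₁ = 2 * t * x₁ / (t ^ 2 - u ^ 2) := by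
          have esum : (t + u)⁻¹ + (t - u)⁻¹ = 2 * t / (t ^ 2 - u ^ 2) := by
            rw [show t ^ 2 - u ^ 2 = (t + u) * (t - u) by ring]
            field_simp
            ring
          rw [esum]
          ring
        have hmono : 2 * t * x₁ / (t ^ 2 - x₁ ^ 2) ≤ 2 * t * x₁ / (t ^ 2 - u ^ 2) := by
          gcongr
          · nlinarith [hu.1, h1]
        rw [emul]
        linarith)
      (x := x₂) ⟨h12, h2⟩
  linarith

/-- Convexity of `v ↦ kLA t (√v)` on `[0, t²]`. -/
lemma kt_psi_convex (t : ℝ) (ht : 0 < t) :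
    ConvexOn ℝ (Set.Icc 0 (t ^ 2)) (fun v => kLA t (Real.sqrt v)) := by
  have hmaps : ∀ v ∈ Set.Icc (0:ℝ) (t ^ 2), Real.sqrt v ∈ Set.Icc (0:ℝ) t := by
    intro v hv
    refine ⟨Real.sqrt_nonneg v, ?_⟩
    calc Real.sqrt v ≤ Real.sqrt (t ^ 2) := Real.sqrt_le_sqrt hv.2
    _ = t := by rw [Real.sqrt_sq ht.le]
  have hderiv : ∀ v ∈ Set.Ioo (0:ℝ) (t ^ 2), HasDerivAt (fun v => kLA t (Real.sqrt v))
      ((Real.log (t + Real.sqrt v) - Real.log (t - Real.sqrt v)) / 2 * (1 / (2 * Real.sqrt v))) v := by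
    intro v hv
    have hsv : 0 < Real.sqrt v := Real.sqrt_pos.2 hv.1
    have hsvt : Real.sqrt v < t := by
      have := Real.sqrt_lt_sqrt (le_of_lt hv.1) hv.2
      rwa [Real.sqrt_sq ht.le] at this
    exact (kt_hasDerivAt_kLA t (Real.sqrt v) (by linarith) (by linarith)).comp v
      (Real.hasDerivAt_sqrt hv.1.ne')
  apply MonotoneOn.convexOn_of_deriv (convex_Icc _ _)
  · exact (kt_continuousOn_kLA t ht).comp (Real.continuous_sqrt.continuousOn) hmaps
  · intro v hv
    rw [interior_Icc] at hv
    exact (hderiv v hv).differentiableAt.differentiableWithinAt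
  · rw [interior_Icc]
    intro v₁ hv₁ v₂ hv₂ h12
    rw [(hderiv v₁ hv₁).deriv, (hderiv v₂ hv₂).deriv]
    set x₁ := Real.sqrt v₁ with hx₁
    set x₂ := Real.sqrt v₂ with hx₂
    have hx1p : 0 < x₁ := Real.sqrt_pos.2 hv₁.1
    have hx2p : 0 < x₂ := Real.sqrt_pos.2 hv₂.1
    have hxle : x₁ ≤ x₂ := Real.sqrt_le_sqrt h12
    have hx2t : x₂ < t := by
      have := Real.sqrt_lt_sqrt (le_of_lt hv₂.1) hv₂.2
      rwa [Real.sqrt_sq ht.le] at this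
    have hkey := kt_slope_mono t ht hx1p hxle hx2t
    rw [div_mul_div_comm, div_mul_div_comm]
    rw [div_le_div_iff₀ (by positivity) (by positivity)]
    nlinarith [hkey]

/-- Composition of a convex function with an affine map. -/
lemma kt_convexOn_comp_affine {D E : Set ℝ} {f : ℝ → ℝ} (hf : ConvexOn ℝ D f) (c d : ℝ)
    (hE : Convex ℝ E) (hmap : ∀ x ∈ E, c * x + d ∈ D) :
    ConvexOn ℝ E (fun x => f (c * x + d)) := by
  refine ⟨hE, fun x hx y hy a b ha hb hab => ?_⟩
  have e : c * (a * x + b * y) + d = a * (c * x + d) + b * (c * y + d) := by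
    linear_combination (-d) * hab
  dsimp only
  rw [smul_eq_mul, smul_eq_mul, e]
  have := hf.2 (hmap x hx) (hmap y hy) ha hb hab
  simpa [smul_eq_mul] using this

/-- Endpoint inequality `z = s`. -/
lemma kt_endpoint_pos (t s : ℝ) (ht : 2 ≤ t) (hs0 : 0 ≤ s) (hs1 : s ≤ t - 1) :
    kLA t (s + 1) - Real.log (t + s) ≤
      kLA (t - 1) s - Real.log t + (Real.log t - Real.log (t - 1)) / 2 := by
  have hM := kt_M_le_two (t + s) (by linarith)
  have hN := kt_N_ge_two t ht
  unfold kLA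
  rw [show t + (s + 1) = t + s + 1 by ring, show t - (s + 1) = t - 1 - s by ring,
    show t - 1 + s = t + s - 1 by ring]
  nlinarith [hM, hN]

/-- Endpoint inequality `z = -s`. -/
lemma kt_endpoint_neg (t s : ℝ) (ht : 2 ≤ t) (hs0 : 0 ≤ s) (hs1 : s ≤ t - 1) :
    kLA t (s - 1) - Real.log (t - s) ≤
      kLA (t - 1) s - Real.log t + (Real.log t - Real.log (t - 1)) / 2 := by
  have hM := kt_M_le_two (t - s) (by linarith)
  have hN := kt_N_ge_two t ht
  unfold kLA
  rw [show t + (s - 1) = t + s - 1 by ring, show t - (s - 1) = t - s + 1 by ring,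
    show t - 1 + s = t + s - 1 by ring, show t - 1 - s = t - s - 1 by ring]
  nlinarith [hM, hN]

/-- The key one-step inequality for the KT potential. -/
lemma kt_step (t s z : ℝ) (ht : 2 ≤ t) (hs0 : 0 ≤ s) (hs1 : s ≤ t - 1)
    (hz1 : -s ≤ z) (hz2 : z ≤ s) :
    kLA t (Real.sqrt (s ^ 2 + 2 * z + 1)) ≤
      kLA (t - 1) s + (Real.log (t + z) - Real.log t) + (Real.log t - Real.log (t - 1)) / 2 := by
  have ht0 : (0:ℝ) < t := by linarith
  set F : ℝ → ℝ := fun z => kLA t (Real.sqrt (s ^ 2 + 2 * z + 1)) - Real.log (t + z) with hF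
  set B : ℝ := kLA (t - 1) s - Real.log t + (Real.log t - Real.log (t - 1)) / 2 with hB
  have hconv : ConvexOn ℝ (Set.Icc (-s) s) F := by
    have h1 : ConvexOn ℝ (Set.Icc (-s) s) (fun z => kLA t (Real.sqrt (2 * z + (s ^ 2 + 1)))) := by
      apply kt_convexOn_comp_affine (kt_psi_convex t ht0) 2 (s ^ 2 + 1) (convex_Icc _ _)
      intro x hx
      constructor
      · nlinarith [hx.1, sq_nonneg (s - 1)]
      · nlinarith [hx.2]
    have h2 : ConvexOn ℝ (Set.Icc (-s) s) (fun z => (fun x => -Real.log x) (1 * z + t)) := by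
      apply kt_convexOn_comp_affine (strictConcaveOn_log_Ioi.concaveOn.neg) 1 t (convex_Icc _ _)
      intro x hx
      simp only [Set.mem_Ioi]
      nlinarith [hx.1]
    simp only [show ∀ x : ℝ, 2 * x + (s ^ 2 + 1) = s ^ 2 + 2 * x + 1 from fun x => by ring] at h1
    simp only [one_mul, show ∀ x : ℝ, x + t = t + x from fun x => add_comm x t] at h2
    have := h1.add h2
    have e : F = (fun z => kLA t (Real.sqrt (s ^ 2 + 2 * z + 1))) + (fun z => -Real.log (t + z)) := by
      funext z; simp [hF, sub_eq_add_neg]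
    rw [e]; exact this
  have hss : -s ≤ s := by linarith
  have hmax := hconv.le_max_of_mem_Icc (Set.left_mem_Icc.2 hss) (Set.right_mem_Icc.2 hss)
    (Set.mem_Icc.2 ⟨hz1, hz2⟩)
  have hFs : F s ≤ B := by
    rw [hF, hB]
    dsimp only
    rw [show s ^ 2 + 2 * s + 1 = (s + 1) ^ 2 by ring, Real.sqrt_sq (by linarith)]
    exact kt_endpoint_pos t s ht hs0 hs1
  have hFns : F (-s) ≤ B := by
    rw [hF, hB]
    dsimp only
    rw [show s ^ 2 + 2 * (-s) + 1 = (s - 1) ^ 2 by ring, Real.sqrt_sq_eq_abs]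
    have habs : kLA t |s - 1| = kLA t (s - 1) := by
      rcases abs_cases (s - 1) with ⟨h, _⟩ | ⟨h, _⟩
      · rw [h]
      · rw [h, kLA_neg]
    rw [habs, show t + -s = t - s by ring]
    exact kt_endpoint_neg t s ht hs0 hs1
  have : F z ≤ B := le_trans hmax (max_le hFns hFs)
  rw [hF, hB] at this
  dsimp only at this
  linarith

lemma kt_numeric : Real.exp 1 ^ 2 * Real.pi < 24 := by
  have h1 := Real.exp_one_lt_d9
  have h2 := Real.pi_lt_d2
  have h3 := Real.exp_pos 1
  nlinarith

set_option maxHeartbeats 1000000 in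
/-- The Fenchel-duality-style scalar inequality. -/
lemma kt_duality (T ε y x : ℝ) (hT : 1 ≤ T) (hε : 0 < ε) (hy : 0 ≤ y) (hx : 0 ≤ x) :
    y * x + ε - ε * Real.exp (x ^ 2 / (2 * T)) / (2 * Real.sqrt T) ≤
      y * Real.sqrt (T * Real.log (1 + 24 * T ^ 2 * y ^ 2 / ε ^ 2)) +
        ε * (1 - 1 / (Real.exp 1 * Real.sqrt (Real.pi * T))) := by
  have hT0 : (0:ℝ) < T := by linarith
  have hπ : (0:ℝ) < Real.pi := Real.pi_pos
  have he : (0:ℝ) < Real.exp 1 := Real.exp_pos 1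
  set a : ℝ := 24 * T ^ 2 * y ^ 2 / ε ^ 2 with ha_def
  have ha0 : 0 ≤ a := by positivity
  have ha_eq : ε ^ 2 * a = 24 * T ^ 2 * y ^ 2 := by
    rw [ha_def]; field_simp
  clear_value a
  set L : ℝ := Real.log (1 + a) with hL_def
  have hL0 : 0 ≤ L := Real.log_nonneg (by linarith)
  have hLexp : Real.exp L = 1 + a := by
    rw [hL_def, Real.exp_log (by linarith : (0:ℝ) < 1 + a)]
  clear_value L
  set R : ℝ := Real.sqrt (T * L) with hR_def
  have hR0 : 0 ≤ R := Real.sqrt_nonneg _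
  have hR2 : R ^ 2 = T * L := Real.sq_sqrt (by positivity)
  clear_value R
  set β : ℝ := ε / (Real.exp 1 * Real.sqrt (Real.pi * T)) with hβ_def
  have hsπT : (0:ℝ) < Real.sqrt (Real.pi * T) := Real.sqrt_pos.2 (by positivity)
  have hβ0 : 0 < β := by rw [hβ_def]; positivity
  have hβ2 : β ^ 2 * (Real.exp 1 ^ 2 * (Real.pi * T)) = ε ^ 2 := by
    rw [hβ_def, div_pow, mul_pow, Real.sq_sqrt (by positivity : (0:ℝ) ≤ Real.pi * T)]
    field_simp
  have hβle : β ≤ ε / (2 * Real.sqrt T) := by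
    have hsT : (0:ℝ) < Real.sqrt T := Real.sqrt_pos.2 hT0
    rw [hβ_def, div_le_div_iff₀ (by positivity) (by positivity)]
    have h1 : Real.sqrt (Real.pi * T) = Real.sqrt Real.pi * Real.sqrt T :=
      Real.sqrt_mul hπ.le T
    have h2 : (1:ℝ) ≤ Real.sqrt Real.pi := Real.one_le_sqrt.2 (by linarith [Real.pi_gt_three])
    have h3 : (2.7182818283:ℝ) < Real.exp 1 := Real.exp_one_gt_d9
    rw [h1]
    have h4 : (2:ℝ) ≤ Real.exp 1 * Real.sqrt Real.pi := by nlinarith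
    nlinarith only [mul_nonneg (sub_nonneg.2 h4) (mul_pos hε hsT).le, h4, hε, hsT]
  clear_value β
  set q : ℝ := x ^ 2 / (2 * T) with hq_def
  have hq0 : 0 ≤ q := by positivity
  have hexpq1 : 1 ≤ Real.exp q := Real.one_le_exp hq0
  clear_value q
  -- Step 0 : β exp q ≤ ε exp q / (2 √T)
  have hstep0 : β * Real.exp q ≤ ε * Real.exp q / (2 * Real.sqrt T) := by
    calc β * Real.exp q ≤ ε / (2 * Real.sqrt T) * Real.exp q :=
          mul_le_mul_of_nonneg_right hβle (by positivity)
      _ = ε * Real.exp q / (2 * Real.sqrt T) := by ring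
  -- the core inequality
  have hcore : y * x - β * Real.exp q ≤ y * R - β := by
    rcases le_or_gt x R with hxR | hxR
    · have h1 : y * x ≤ y * R := mul_le_mul_of_nonneg_left hxR hy
      nlinarith only [hβ0, hexpq1, h1, hy]
    · -- x > R
      have heR : Real.exp (R ^ 2 / (2 * T)) = Real.sqrt (1 + a) := by
        rw [hR2, show T * L / (2 * T) = L / 2 by field_simp]
        rw [show (1:ℝ) + a = Real.exp L from hLexp.symm, Real.exp_half]
      have hs1a : (1:ℝ) ≤ Real.sqrt (1 + a) := Real.one_le_sqrt.2 (by linarith)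
      have hsq1a : Real.sqrt (1 + a) ^ 2 = 1 + a := Real.sq_sqrt (by linarith)
      rcases le_or_gt (Real.exp 1 ^ 2 * Real.pi) (24 * L) with hc | hc
      · -- large-y case : tangent line bound
        set u : ℝ := (x ^ 2 - R ^ 2) / (2 * T) with hu_def
        have hqu : q = R ^ 2 / (2 * T) + u := by rw [hq_def, hu_def]; ring
        have hexp_split : Real.exp q = Real.sqrt (1 + a) * Real.exp u := by
          rw [hqu, Real.exp_add, heR]
        clear_value u
        have huge : (x - R) * R / T ≤ u := by
          rw [hu_def, div_le_div_iff₀ hT0 (by positivity)]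
          nlinarith only [mul_nonneg hT0.le (sq_nonneg (x - R)), hT0]
        have hexp_lb : Real.sqrt (1 + a) * (1 + (x - R) * R / T) ≤ Real.exp q := by
          rw [hexp_split]
          have h1 : 1 + (x - R) * R / T ≤ Real.exp u := by
            have := Real.add_one_le_exp u
            linarith
          exact mul_le_mul_of_nonneg_left h1 (by positivity)
        -- key : y * T ≤ β * √(1+a) * R
        have hkey : y * T ≤ β * Real.sqrt (1 + a) * R := by
          have hsq : (y * T) ^ 2 ≤ (β * Real.sqrt (1 + a) * R) ^ 2 := by
            have e1 : (β * Real.sqrt (1 + a) * R) ^ 2 = β ^ 2 * (1 + a) * (T * L) := by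
              rw [mul_pow, mul_pow, hsq1a, hR2]
            rw [e1]
            have s1 : y ^ 2 * T ^ 2 * (Real.exp 1 ^ 2 * Real.pi) ≤ y ^ 2 * T ^ 2 * (24 * L) :=
              mul_le_mul_of_nonneg_left hc (by positivity)
            have s3 : 0 ≤ ε ^ 2 * L := by positivity
            have s5 : ε ^ 2 * a * L = 24 * T ^ 2 * y ^ 2 * L := by rw [ha_eq]
            rw [← mul_le_mul_iff_of_pos_right (show (0:ℝ) < Real.exp 1 ^ 2 * Real.pi by positivity)]
            have expand : β ^ 2 * (1 + a) * (T * L) * (Real.exp 1 ^ 2 * Real.pi)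
                = (β ^ 2 * (Real.exp 1 ^ 2 * (Real.pi * T))) * ((1 + a) * L) := by ring
            rw [expand, hβ2]
            linarith only [s1, s3, s5]
          have h1 := Real.sqrt_le_sqrt hsq
          rwa [Real.sqrt_sq (by positivity), Real.sqrt_sq (by positivity)] at h1
        have hykey : y * (x - R) ≤ β * Real.sqrt (1 + a) * R / T * (x - R) := by
          apply mul_le_mul_of_nonneg_right _ (by linarith)
          rw [le_div_iff₀ hT0]
          linarith
        have hfin : β * (Real.sqrt (1 + a) * (1 + (x - R) * R / T)) ≤ β * Real.exp q :=
          mul_le_mul_of_nonneg_left hexp_lb hβ0.le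
        have hβs : β ≤ β * Real.sqrt (1 + a) := by nlinarith only [hβ0, hs1a]
        have e3 : β * (Real.sqrt (1 + a) * (1 + (x - R) * R / T))
            = β * Real.sqrt (1 + a) + β * Real.sqrt (1 + a) * R / T * (x - R) := by ring
        rw [e3] at hfin
        linarith only [hfin, hykey, hβs]
      · -- small-y case : quadratic bound
        have hquad : 2 * (β * T) * (y * x) ≤ β ^ 2 * x ^ 2 + y ^ 2 * T ^ 2 := by
          nlinarith only [sq_nonneg (β * x - y * T)]
        have hq1 : y * x ≤ β * q + y ^ 2 * T / (2 * β) := by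
          rw [hq_def]
          rw [show β * (x ^ 2 / (2 * T)) + y ^ 2 * T / (2 * β)
            = (β ^ 2 * x ^ 2 + y ^ 2 * T ^ 2) / (2 * (β * T)) by
              field_simp]
          rw [le_div_iff₀ (by positivity)]
          linarith only [hquad]
        have hexp : β * (1 + q) ≤ β * Real.exp q :=
          mul_le_mul_of_nonneg_left (by linarith [Real.add_one_le_exp q]) hβ0.le
        have hyR : y ^ 2 * T / (2 * β) ≤ y * R := by
          rcases eq_or_lt_of_le hy with hy0 | hy0
          · rw [← hy0]; simp
          · have hc24 : (0:ℝ) < Real.exp 1 ^ 2 * Real.pi / 24 := by positivity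
            have hA0 : (0:ℝ) < Real.exp (Real.exp 1 ^ 2 * Real.pi / 24) - 1 := by
              nlinarith only [Real.add_one_le_exp (Real.exp 1 ^ 2 * Real.pi / 24), hc24]
            set A : ℝ := Real.exp (Real.exp 1 ^ 2 * Real.pi / 24) - 1 with hA_def
            have hA4 : A ≤ 4 := by
              have h1 : Real.exp 1 ^ 2 * Real.pi / 24 < 1 := by
                have := kt_numeric; linarith
              have h2 : Real.exp (Real.exp 1 ^ 2 * Real.pi / 24) < Real.exp 1 :=
                Real.exp_lt_exp.2 h1
              have h3 := Real.exp_one_lt_d9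
              rw [hA_def]; linarith
            have haA : a < A := by
              have h2 : L < Real.exp 1 ^ 2 * Real.pi / 24 := by linarith
              have h3 : Real.exp L < Real.exp (Real.exp 1 ^ 2 * Real.pi / 24) :=
                Real.exp_lt_exp.2 h2
              rw [hLexp] at h3
              rw [hA_def]; linarith
            clear_value A
            -- Bernoulli : (a/A) * (e²π/24) ≤ L
            have hbern : a / A * (Real.exp 1 ^ 2 * Real.pi / 24) ≤ L := by
              have hb := rpow_one_add_le_one_add_mul_self (s := A) (by linarith)
                (p := a / A) (by positivity) (by rw [div_le_one hA0]; linarith)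
              have hlog := Real.log_le_log (by positivity) hb
              rw [Real.log_rpow (by linarith : (0:ℝ) < 1 + A)] at hlog
              have e1 : Real.log (1 + A) = Real.exp 1 ^ 2 * Real.pi / 24 := by
                rw [hA_def, show 1 + (Real.exp (Real.exp 1 ^ 2 * Real.pi / 24) - 1)
                  = Real.exp (Real.exp 1 ^ 2 * Real.pi / 24) by ring, Real.log_exp]
              have e2 : 1 + a / A * A = 1 + a := by field_simp
              rw [e1, e2] at hlog
              rw [hL_def]
              exact hlog
            have hsq : (y * T) ^ 2 ≤ (2 * β * R) ^ 2 := by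
              have e1 : (2 * β * R) ^ 2 = 4 * β ^ 2 * (T * L) := by
                rw [mul_pow, mul_pow, hR2]; ring
              rw [e1, ← mul_le_mul_iff_of_pos_right (show (0:ℝ) < Real.exp 1 ^ 2 * Real.pi by positivity)]
              have expand : 4 * β ^ 2 * (T * L) * (Real.exp 1 ^ 2 * Real.pi)
                  = 4 * (β ^ 2 * (Real.exp 1 ^ 2 * (Real.pi * T))) * L := by ring
              rw [expand, hβ2]
              have s1 : a / 4 * (Real.exp 1 ^ 2 * Real.pi / 24)
                  ≤ a / A * (Real.exp 1 ^ 2 * Real.pi / 24) := by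
                apply mul_le_mul_of_nonneg_right _ (by positivity)
                gcongr
                all_goals linarith
              have s2 : a / 4 * (Real.exp 1 ^ 2 * Real.pi / 24) ≤ L := le_trans s1 hbern
              have s3 : ε ^ 2 * (a / 4 * (Real.exp 1 ^ 2 * Real.pi / 24)) ≤ ε ^ 2 * L :=
                mul_le_mul_of_nonneg_left s2 (by positivity)
              have s4 : ε ^ 2 * (a / 4 * (Real.exp 1 ^ 2 * Real.pi / 24))
                  = (ε ^ 2 * a) * (Real.exp 1 ^ 2 * Real.pi) / 96 := by ring
              rw [s4, ha_eq] at s3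
              linarith only [s3]
            have h1 := Real.sqrt_le_sqrt hsq
            rw [Real.sqrt_sq (by positivity), Real.sqrt_sq (by positivity)] at h1
            rw [div_le_iff₀ (by linarith : (0:ℝ) < 2 * β)]
            nlinarith only [mul_le_mul_of_nonneg_left h1 hy]
        linarith only [hq1, hexp, hyR]
  have hfinal : ε * (1 - 1 / (Real.exp 1 * Real.sqrt (Real.pi * T))) = ε - β := by
    rw [hβ_def]
    field_simp
  rw [hfinal]
  linarith only [hcore, hstep0]

lemma kt_base (x : ℝ) (h0 : 0 ≤ x) (h1 : x ≤ 1) : kLA 1 x ≤ Real.log 2 := by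
  unfold kLA
  have e1 : (1 + x) / 2 * Real.log (1 + x) ≤ Real.log 2 := by
    have l1 : Real.log (1 + x) ≤ Real.log 2 := Real.log_le_log (by linarith) (by linarith)
    have l0 : 0 ≤ Real.log (1 + x) := Real.log_nonneg (by linarith)
    nlinarith only [l1, l0, h0, h1]
  have e2 : (1 - x) / 2 * Real.log (1 - x) ≤ 0 :=
    mul_nonpos_of_nonneg_of_nonpos (by linarith) (Real.log_nonpos (by linarith) (by linarith))
  simp only [Real.log_one]
  linarith

open scoped RealInnerProductSpace in
set_option maxHeartbeats 1000000 in
theorem kt_main {H : Type*} [NormedAddCommGroup H] [InnerProductSpace ℝ H]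
    (ε : ℝ) (hε : 0 < ε) (g : ℕ → H) (hg : ∀ t : ℕ, ‖g t‖ ≤ 1)
    (w : ℕ → H)
    (hw : ∀ t : ℕ, 1 ≤ t → w t =
      ((1 / (t : ℝ)) * (ε + ∑ i ∈ Finset.Icc 1 (t - 1), ⟪g i, w i⟫)) •
        (∑ i ∈ Finset.Icc 1 (t - 1), g i))
    (T : ℕ) (hT : 1 ≤ T) (u : H) :
    ∑ t ∈ Finset.Icc 1 T, ⟪g t, u⟫ - ∑ t ∈ Finset.Icc 1 T, ⟪g t, w t⟫ ≤
      ‖u‖ * Real.sqrt ((T : ℝ) * Real.log (1 + 24 * (T : ℝ) ^ 2 * ‖u‖ ^ 2 / ε ^ 2)) +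
        ε * (1 - 1 / (Real.exp 1 * Real.sqrt (Real.pi * (T : ℝ)))) := by
  set G : ℕ → H := fun n => ∑ i ∈ Finset.Icc 1 n, g i with hG
  set W : ℕ → ℝ := fun n => ε + ∑ i ∈ Finset.Icc 1 n, ⟪g i, w i⟫ with hW
  have hG0 : G 0 = 0 := by simp [hG]
  have hW0 : W 0 = ε := by simp [hW]
  have hGnorm : ∀ n : ℕ, ‖G n‖ ≤ (n : ℝ) := by
    intro n
    calc ‖G n‖ ≤ ∑ i ∈ Finset.Icc 1 n, ‖g i‖ := norm_sum_le _ _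
      _ ≤ ∑ i ∈ Finset.Icc 1 n, 1 := Finset.sum_le_sum (fun i _ => hg i)
      _ = (n : ℝ) := by simp [Nat.card_Icc]
  have hGsucc : ∀ n : ℕ, G (n + 1) = G n + g (n + 1) := by
    intro n
    simp only [hG]
    rw [Finset.sum_Icc_succ_top (by omega : 1 ≤ n + 1)]
  have hWrec : ∀ n : ℕ, W (n + 1) = W n * (1 + ⟪g (n + 1), G n⟫ / ((n : ℝ) + 1)) := by
    intro n
    have hw' := hw (n + 1) (by omega)
    rw [Nat.add_sub_cancel] at hw'
    have hip : ⟪g (n + 1), w (n + 1)⟫ = (1 / ((n : ℝ) + 1)) * W n * ⟪g (n + 1), G n⟫ := by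
      rw [hw', real_inner_smul_right]
      push_cast
      rw [hW, hG]
    have : W (n + 1) = W n + ⟪g (n + 1), w (n + 1)⟫ := by
      simp only [hW]
      rw [Finset.sum_Icc_succ_top (by omega : 1 ≤ n + 1)]
      ring
    rw [this, hip]
    have hn1 : ((n : ℝ) + 1) ≠ 0 := by positivity
    field_simp
  have hzbound : ∀ n : ℕ, |⟪g (n + 1), G n⟫| ≤ ‖G n‖ := by
    intro n
    calc |⟪g (n + 1), G n⟫| ≤ ‖g (n + 1)‖ * ‖G n‖ := abs_real_inner_le_norm _ _
      _ ≤ 1 * ‖G n‖ := mul_le_mul_of_nonneg_right (hg _) (norm_nonneg _)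
      _ = ‖G n‖ := one_mul _
  have hfac : ∀ n : ℕ, 0 < 1 + ⟪g (n + 1), G n⟫ / ((n : ℝ) + 1) := by
    intro n
    have h1 := hzbound n
    have h2 := hGnorm n
    have h3 : (0:ℝ) < (n : ℝ) + 1 := by positivity
    have h4 : (-1:ℝ) < ⟪g (n + 1), G n⟫ / ((n : ℝ) + 1) := by
      rw [lt_div_iff₀ h3]
      have := (abs_le.1 (h1.trans h2)).1
      linarith
    linarith
  have hWpos : ∀ n : ℕ, 0 < W n := by
    intro n
    induction n with
    | zero => rw [hW0]; exact hε
    | succ k ih =>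
      rw [hWrec k]
      exact mul_pos ih (hfac k)
  -- the wealth invariant
  have hInv : ∀ n : ℕ, 1 ≤ n →
      Real.log ε + kLA (n : ℝ) ‖G n‖ - Real.log (2 * Real.sqrt (n : ℝ)) ≤ Real.log (W n) := by
    intro n hn
    induction n, hn using Nat.le_induction with
    | base =>
      have hW1 : W 1 = ε := by
        rw [show (1:ℕ) = 0 + 1 from rfl, hWrec 0, hG0]
        simp [hW0]
      have hG1 : G 1 = g 1 := by
        simp only [hG]
        rw [show (1:ℕ) = 0 + 1 from rfl, Finset.sum_Icc_succ_top (by omega : 1 ≤ 0 + 1)]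
        simp
      rw [hW1, hG1]
      have hb := kt_base ‖g 1‖ (norm_nonneg _) (hg 1)
      have h2 : Real.log (2 * Real.sqrt 1) = Real.log 2 := by
        rw [Real.sqrt_one, mul_one]
      push_cast
      rw [h2]
      linarith
    | succ k hk ih =>
      -- notation
      set s : ℝ := ‖G k‖ with hs_def
      set z : ℝ := ⟪g (k + 1), G k⟫ with hz_def
      have hkR : (1:ℝ) ≤ (k : ℝ) := by exact_mod_cast hk
      have ht2 : (2:ℝ) ≤ (k : ℝ) + 1 := by linarith
      have ht0 : (0:ℝ) < (k : ℝ) + 1 := by linarith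
      have hs0 : 0 ≤ s := norm_nonneg _
      have hs1 : s ≤ (k : ℝ) + 1 - 1 := by
        have := hGnorm k
        linarith
      have hzb : |z| ≤ s := hzbound k
      have hz1 : -s ≤ z := (abs_le.1 hzb).1
      have hz2 : z ≤ s := (abs_le.1 hzb).2
      -- step inequality
      have hstep := kt_step ((k : ℝ) + 1) s z ht2 hs0 hs1 hz1 hz2
      rw [show (k : ℝ) + 1 - 1 = (k : ℝ) by ring] at hstep
      -- norm bound
      have hnormsq : ‖G (k + 1)‖ ≤ Real.sqrt (s ^ 2 + 2 * z + 1) := by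
        have h1 : ‖G (k + 1)‖ ^ 2 ≤ s ^ 2 + 2 * z + 1 := by
          rw [hGsucc k, norm_add_sq_real, real_inner_comm]
          have hg2 : ‖g (k + 1)‖ ^ 2 ≤ 1 := by
            nlinarith [hg (k + 1), norm_nonneg (g (k + 1))]
          rw [← hz_def, ← hs_def]
          linarith
        exact (Real.le_sqrt (norm_nonneg _) (by nlinarith only [sq_nonneg (s - 1), hz1])).2 h1
      have hsqle : Real.sqrt (s ^ 2 + 2 * z + 1) ≤ (k : ℝ) + 1 := by
        calc Real.sqrt (s ^ 2 + 2 * z + 1) ≤ Real.sqrt ((s + 1) ^ 2) :=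
              Real.sqrt_le_sqrt (by nlinarith)
          _ = s + 1 := Real.sqrt_sq (by linarith)
          _ ≤ (k : ℝ) + 1 := by linarith
      have hmono : kLA ((k : ℝ) + 1) ‖G (k + 1)‖ ≤ kLA ((k : ℝ) + 1) (Real.sqrt (s ^ 2 + 2 * z + 1)) :=
        kt_kLA_mono ((k : ℝ) + 1) ht0
          (Set.mem_Icc.2 ⟨norm_nonneg _, le_trans hnormsq hsqle⟩)
          (Set.mem_Icc.2 ⟨Real.sqrt_nonneg _, hsqle⟩)
          hnormsq
      -- wealth recursion in logs
      have hfack := hfac k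
      rw [← hz_def] at hfack
      have hlogW : Real.log (W (k + 1)) = Real.log (W k) + Real.log (1 + z / ((k : ℝ) + 1)) := by
        rw [hWrec k, ← hz_def, Real.log_mul (hWpos k).ne' hfack.ne']
      have hlogfac : Real.log (1 + z / ((k : ℝ) + 1))
          = Real.log ((k : ℝ) + 1 + z) - Real.log ((k : ℝ) + 1) := by
        rw [show 1 + z / ((k : ℝ) + 1) = ((k : ℝ) + 1 + z) / ((k : ℝ) + 1) by field_simp,
          Real.log_div (by nlinarith [hfack] : (k : ℝ) + 1 + z ≠ 0) ht0.ne']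
      -- log of the normalizer
      have hnorm1 : Real.log (2 * Real.sqrt ((k : ℝ) + 1))
          = Real.log 2 + Real.log ((k : ℝ) + 1) / 2 := by
        rw [Real.log_mul two_ne_zero (Real.sqrt_pos.2 ht0).ne', Real.log_sqrt ht0.le]
      have hnorm2 : Real.log (2 * Real.sqrt (k : ℝ))
          = Real.log 2 + Real.log (k : ℝ) / 2 := by
        rw [Real.log_mul two_ne_zero (Real.sqrt_pos.2 (by linarith)).ne',
          Real.log_sqrt (by linarith)]
      rw [hnorm2] at ih
      push_cast
      rw [hlogW, hlogfac, hnorm1]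
      linarith [hmono, hstep, ih]
  -- final assembly
  have hsum1 : ∑ t ∈ Finset.Icc 1 T, ⟪g t, u⟫ = ⟪G T, u⟫ := by
    rw [hG, sum_inner]
  have hsum2 : ∑ t ∈ Finset.Icc 1 T, ⟪g t, w t⟫ = W T - ε := by
    rw [hW]
    ring
  have hTR : (1:ℝ) ≤ (T : ℝ) := by exact_mod_cast hT
  have hTR0 : (0:ℝ) < (T : ℝ) := by linarith
  have hxT : ‖G T‖ ≤ (T : ℝ) := hGnorm T
  -- wealth lower bound
  have hWT : ε * Real.exp (‖G T‖ ^ 2 / (2 * (T : ℝ))) / (2 * Real.sqrt (T : ℝ)) ≤ W T := by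
    have h1 := hInv T hT
    have h2 := kt_kLA_ge (T : ℝ) ‖G T‖ hTR0 (norm_nonneg _) hxT
    have h3 : Real.log ε + ‖G T‖ ^ 2 / (2 * (T : ℝ)) - Real.log (2 * Real.sqrt (T : ℝ))
        ≤ Real.log (W T) := by linarith
    have h4 := Real.exp_le_exp.2 h3
    rw [Real.exp_log (hWpos T)] at h4
    rw [Real.exp_sub, Real.exp_add, Real.exp_log hε,
      Real.exp_log (by positivity : (0:ℝ) < 2 * Real.sqrt (T : ℝ))] at h4
    exact h4
  have hdual := kt_duality (T : ℝ) ε ‖u‖ ‖G T‖ hTR hε (norm_nonneg u) (norm_nonneg _)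
  have hinner : ⟪G T, u⟫ ≤ ‖G T‖ * ‖u‖ := real_inner_le_norm _ _
  rw [hsum1, hsum2]
  nlinarith only [hdual, hinner, hWT]

end KTAux

/-- Corollary 1 (Regret bound for the KT-based OLO algorithm over a Hilbert
space): the algorithm predicting
`w_t = (1/t)·(ε + ∑_{i<t} ⟨g_i, w_i⟩)·∑_{i<t} g_i` on rewards with `‖g_t‖ ≤ 1`
satisfies, for every `T ≥ 1` and every `u`,
`Regret_T(u) ≤ ‖u‖·√(T·ln(1 + 24T²‖u‖²/ε²)) + ε·(1 - 1/(e√(πT)))`. -/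
theorem stmt_16 {H : Type*} [NormedAddCommGroup H] [InnerProductSpace ℝ H]
    (ε : ℝ) (hε : 0 < ε) (g : ℕ → H) (hg : ∀ t : ℕ, ‖g t‖ ≤ 1)
    (w : ℕ → H)
    (hw : ∀ t : ℕ, 1 ≤ t → w t =
      ((1 / (t : ℝ)) * (ε + ∑ i ∈ Finset.Icc 1 (t - 1), ⟪g i, w i⟫)) •
        (∑ i ∈ Finset.Icc 1 (t - 1), g i))
    (T : ℕ) (hT : 1 ≤ T) (u : H) :
    ∑ t ∈ Finset.Icc 1 T, ⟪g t, u⟫ - ∑ t ∈ Finset.Icc 1 T, ⟪g t, w t⟫ ≤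
      ‖u‖ * Real.sqrt ((T : ℝ) * Real.log (1 + 24 * (T : ℝ) ^ 2 * ‖u‖ ^ 2 / ε ^ 2)) +
        ε * (1 - 1 / (Real.exp 1 * Real.sqrt (Real.pi * (T : ℝ)))) := by
  exact kt_main ε hε g hg w hw T hT u
end

section
/- Let N ≥ 2 and T ≥ 0 be integers and π ∈ Δ_N a prior with π_i > 0 for all i. Define, for each round t = 1, …, T and each expert i ∈ {1,…,N}: w_{t,i} = (Σ_{j=1}^{t−1} g̃_{j,i}) / (t + T/2) · (1 + Σ_{j=1}^{t−1} g̃_{j,i} w_{j,i}); p̂_{t,i} = π_i · max(w_{t,i}, 0); p_t = p̂_t/‖p̂_t‖₁ if ‖p̂_t‖₁ > 0 and p_t = π otherwise; and, upon receiving the reward vector g_t ∈ [0,1]^N, g̃_{t,i} = g_{t,i} − ⟨g_t, p_t⟩ if w_{t,i} > 0 and g̃_{t,i} = max(g_{t,i} − ⟨g_t, p_t⟩, 0) if w_{t,i} ≤ 0. Then for every u ∈ Δ_N, Σ_{t=1}^T ⟨g_t, u − p_t⟩ ≤ √( 3T · (3 + KL(u‖π)) ). -/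
open Finset

private lemma mono_aux {f f' : ℝ → ℝ} {u : ℝ} (hu : 0 ≤ u)
    (hf : ∀ s, s ∈ Set.Icc 0 u → HasDerivAt f (f' s) s)
    (hf' : ∀ s, s ∈ Set.Icc 0 u → 0 ≤ f' s) : f 0 ≤ f u := by
  have h := monotoneOn_of_deriv_nonneg (convex_Icc 0 u)
    (fun s hs => (hf s hs).continuousAt.continuousWithinAt)
    (fun s hs => (hf s (interior_subset hs)).differentiableAt.differentiableWithinAt)
    (fun s hs => by rw [(hf s (interior_subset hs)).deriv]; exact hf' s (interior_subset hs))
  exact h (Set.left_mem_Icc.2 hu) (Set.right_mem_Icc.2 hu) hu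

private lemma log_one_add_lb {u : ℝ} (hu : 0 ≤ u) : u - u^2/2 ≤ Real.log (1+u) := by
  have key : (fun s : ℝ => Real.log (1+s) - s + s^2/2) 0 ≤
      (fun s : ℝ => Real.log (1+s) - s + s^2/2) u := by
    refine mono_aux (f := fun s : ℝ => Real.log (1+s) - s + s^2/2) (f' := fun s => 1/(1+s) - 1 + s) hu ?_ ?_
    · intro s hs
      have hs0 : (0:ℝ) ≤ s := hs.1
      have h1 : HasDerivAt (fun s : ℝ => 1+s) 1 s := (hasDerivAt_id s).const_add 1
      have h2 : HasDerivAt (fun s : ℝ => Real.log (1+s)) (1/(1+s)) s := by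
        simpa using h1.log (by linarith)
      have h3 : HasDerivAt (fun s : ℝ => s^2/2) s s := by
        simpa using (hasDerivAt_pow 2 s).div_const 2
      exact (h2.sub (hasDerivAt_id s)).add h3
    · intro s hs
      have hs0 : (0:ℝ) ≤ s := hs.1
      have h1 : (0:ℝ) < 1 + s := by linarith
      show 0 ≤ 1/(1+s) - 1 + s
      have : 1/(1+s) - 1 + s = s^2/(1+s) := by field_simp; ring
      rw [this]; positivity
  simp only [add_zero, Real.log_one] at key
  nlinarith [key]

private lemma log_one_sub_ub {s : ℝ} (h0 : 0 ≤ s) (h1 : s < 1) :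
    Real.log (1-s) ≤ -s - s^2/2 := by
  have key : (fun t : ℝ => -Real.log (1-t) - t - t^2/2) 0 ≤
      (fun t : ℝ => -Real.log (1-t) - t - t^2/2) s := by
    refine mono_aux (f := fun t : ℝ => -Real.log (1-t) - t - t^2/2) (f' := fun t => 1/(1-t) - 1 - t) h0 ?_ ?_
    · intro t ht
      have h1t : (0:ℝ) < 1 - t := by cases ht; linarith
      have hA : HasDerivAt (fun t : ℝ => 1-t) (-1) t := by
        simpa using (hasDerivAt_id t).const_sub 1
      have hB : HasDerivAt (fun t : ℝ => Real.log (1-t)) (-1/(1-t)) t :=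
        hA.log (ne_of_gt h1t)
      have h3 : HasDerivAt (fun t : ℝ => t^2/2) t t := by
        simpa using (hasDerivAt_pow 2 t).div_const 2
      have := (hB.neg.sub (hasDerivAt_id t)).sub h3
      refine this.congr_deriv ?_
      ring
    · intro t ht
      have h1t : (0:ℝ) < 1 - t := by cases ht; linarith
      have ht0 : (0:ℝ) ≤ t := ht.1
      show 0 ≤ 1/(1-t) - 1 - t
      have : 1/(1-t) - 1 - t = t^2/(1-t) := by field_simp; ring
      rw [this]; positivity
  simp only [sub_zero, Real.log_one] at key
  nlinarith [key]

private lemma pinsker_nn {r : ℝ} (h0 : 0 ≤ r) (h1 : r < 1) :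
    r^2 ≤ (1+r)*Real.log (1+r) + (1-r)*Real.log (1-r) := by
  have key : (fun t : ℝ => (1+t)*Real.log (1+t) + (1-t)*Real.log (1-t) - t^2) 0 ≤
      (fun t : ℝ => (1+t)*Real.log (1+t) + (1-t)*Real.log (1-t) - t^2) r := by
    refine mono_aux (f := fun t : ℝ => (1+t)*Real.log (1+t) + (1-t)*Real.log (1-t) - t^2) (f' := fun t => Real.log (1+t) - Real.log (1-t) - 2*t) h0 ?_ ?_
    · intro t ht
      have h1t : (0:ℝ) < 1 - t := by cases ht; linarith
      have h1t' : (0:ℝ) < 1 + t := by cases ht; linarith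
      have hA : HasDerivAt (fun t : ℝ => 1+t) 1 t := (hasDerivAt_id t).const_add 1
      have hB : HasDerivAt (fun t : ℝ => 1-t) (-1) t := by
        simpa using (hasDerivAt_id t).const_sub 1
      have hLA : HasDerivAt (fun t : ℝ => Real.log (1+t)) (1/(1+t)) t := by
        simpa using hA.log (ne_of_gt h1t')
      have hLB : HasDerivAt (fun t : ℝ => Real.log (1-t)) (-1/(1-t)) t :=
        hB.log (ne_of_gt h1t)
      have h3 : HasDerivAt (fun t : ℝ => t^2) (2*t) t := by
        simpa using (hasDerivAt_pow 2 t)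
      have := ((hA.mul hLA).add (hB.mul hLB)).sub h3
      refine this.congr_deriv ?_
      rw [mul_one_div_cancel h1t'.ne', mul_div_assoc', mul_neg_one, neg_div_self h1t.ne']
      ring
    · intro t ht
      have h1t : t < 1 := lt_of_le_of_lt ht.2 h1
      have := log_one_add_lb ht.1
      have := log_one_sub_ub ht.1 h1t
      show 0 ≤ Real.log (1+t) - Real.log (1-t) - 2*t
      linarith
  simp only [add_zero, sub_zero, Real.log_one] at key
  nlinarith [key]

private lemma pinsker {r : ℝ} (h1 : |r| < 1) :
    r^2 ≤ (1+r)*Real.log (1+r) + (1-r)*Real.log (1-r) := by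
  rcases le_or_gt 0 r with h | h
  · exact pinsker_nn h (lt_of_abs_lt h1)
  · have h' : 0 ≤ -r := by linarith
    have h1' : -r < 1 := lt_of_abs_lt (by rwa [abs_neg])
    have := pinsker_nn h' h1'
    have e1 : (1 + -r) = 1 - r := by ring
    have e2 : (1 - -r) = 1 + r := by ring
    rw [e1, e2] at this
    nlinarith [this]

noncomputable def psiF (n y : ℝ) : ℝ :=
  ((n+y)*Real.log (n+y) + (n-y)*Real.log (n-y))/2 - n*Real.log n

lemma psiF_zero (n : ℝ) : psiF n 0 = 0 := by simp [psiF]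

lemma psiF_even (n y : ℝ) : psiF n (-y) = psiF n y := by
  simp only [psiF]
  have e1 : n + -y = n - y := by ring
  have e2 : n - -y = n + y := by ring
  rw [e1, e2]; ring

lemma psiF_scaled {n r : ℝ} (hn : 0 < n) (h1 : -1 < r) (h2 : r < 1) :
    psiF n (n*r) = (n/2)*((1+r)*Real.log (1+r) + (1-r)*Real.log (1-r)) := by
  have hr1 : (0:ℝ) < 1 + r := by linarith
  have hr2 : (0:ℝ) < 1 - r := by linarith
  have e1 : n + n*r = n*(1+r) := by ring
  have e2 : n - n*r = n*(1-r) := by ring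
  simp only [psiF, e1, e2, Real.log_mul hn.ne' hr1.ne', Real.log_mul hn.ne' hr2.ne']
  ring

lemma psiF_quad {n y : ℝ} (hn : 0 < n) (hy : |y| < n) : y^2/(2*n) ≤ psiF n y := by
  set r := y/n with hrdef
  have hy' : n*r = y := by rw [hrdef]; field_simp
  have h1 : -1 < r := by
    rw [hrdef]; rw [lt_div_iff₀ hn]; have := (abs_lt.1 hy).1; linarith
  have h2 : r < 1 := by
    rw [hrdef]; rw [div_lt_iff₀ hn]; have := (abs_lt.1 hy).2; linarith
  have hp := pinsker (show |r| < 1 from abs_lt.2 ⟨h1, h2⟩)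
  have := psiF_scaled hn h1 h2
  rw [hy'] at this
  rw [this]
  have hq : y^2/(2*n) = (n/2)*r^2 := by
    rw [hrdef]; field_simp
  rw [hq]
  have := mul_le_mul_of_nonneg_left hp (show (0:ℝ) ≤ n/2 by positivity)
  linarith

lemma psiF_chord {n x gl : ℝ} (h1 : 0 ≤ n + x - 1) (h2 : 0 ≤ n - x - 1) (hg : |gl| ≤ 1) :
    psiF n (x+gl) ≤ (1-gl)/2 * psiF n (x-1) + (1+gl)/2 * psiF n (x+1) := by
  obtain ⟨hg1, hg2⟩ := abs_le.1 hg
  set lam := (1-gl)/2 with hlamdef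
  set mu := (1+gl)/2 with hmudef
  have hlam : 0 ≤ lam := by rw [hlamdef]; linarith
  have hmu : 0 ≤ mu := by rw [hmudef]; linarith
  have hsum : lam + mu = 1 := by rw [hlamdef, hmudef]; ring
  have hq := Real.convexOn_mul_log
  have c1 : (n+(x+gl)) * Real.log (n+(x+gl)) ≤
      lam * ((n+x-1)*Real.log (n+x-1)) + mu * ((n+x+1)*Real.log (n+x+1)) := by
    have := hq.2 (Set.mem_Ici.2 h1) (Set.mem_Ici.2 (show (0:ℝ) ≤ n+x+1 by linarith)) hlam hmu hsum
    have e : lam • (n+x-1) + mu • (n+x+1) = n+(x+gl) := by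
      simp only [smul_eq_mul, hlamdef, hmudef]; ring
    rw [e] at this
    simpa [smul_eq_mul] using this
  have c2 : (n-(x+gl)) * Real.log (n-(x+gl)) ≤
      lam * ((n-x+1)*Real.log (n-x+1)) + mu * ((n-x-1)*Real.log (n-x-1)) := by
    have := hq.2 (Set.mem_Ici.2 (show (0:ℝ) ≤ n-x+1 by linarith)) (Set.mem_Ici.2 h2) hlam hmu hsum
    have e : lam • (n-x+1) + mu • (n-x-1) = n-(x+gl) := by
      simp only [smul_eq_mul, hlamdef, hmudef]; ring
    rw [e] at this
    simpa [smul_eq_mul] using this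
  have expand : lam * psiF n (x-1) + mu * psiF n (x+1) =
      (lam * ((n+x-1)*Real.log (n+x-1)) + mu * ((n+x+1)*Real.log (n+x+1))
        + (lam * ((n-x+1)*Real.log (n-x+1)) + mu * ((n-x-1)*Real.log (n-x-1))))/2
        - n*Real.log n := by
    simp only [psiF]
    have e1 : n + (x-1) = n+x-1 := by ring
    have e2 : n - (x-1) = n-x+1 := by ring
    have e3 : n + (x+1) = n+x+1 := by ring
    have e4 : n - (x+1) = n-x-1 := by ring
    rw [e1, e2, e3, e4]
    linear_combination (n * Real.log n) * hsum
  have lhs : psiF n (x+gl) =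
      ((n+(x+gl))*Real.log (n+(x+gl)) + (n-(x+gl))*Real.log (n-(x+gl)))/2 - n*Real.log n := rfl
  rw [lhs, expand]
  linarith [c1, c2]
lemma psiF_step {m δ x : ℝ} (hδ : 0 < δ) (hm : δ ≤ m) (hx : |x| ≤ m - δ) :
    psiF (m+1) (x+1) ≤ psiF m x + Real.log ((m+1+x)/(m+1)) + (1/(δ+1) + 1/(2*m)) := by
  obtain ⟨hx1, hx2⟩ := abs_le.1 hx
  have hm0 : 0 < m := lt_of_lt_of_le hδ hm
  have ha1 : δ ≤ m + x := by linarith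
  have ha0 : 0 < m + x := lt_of_lt_of_le hδ ha1
  have hb0 : 0 < m - x := lt_of_lt_of_le hδ (by linarith)
  -- log expansion of the division
  have l1 : Real.log ((m+1+x)/(m+1)) = Real.log (m+x+1) - Real.log (m+1) := by
    rw [show m+1+x = m+x+1 by ring, Real.log_div (by positivity) (by positivity)]
  -- claim 1
  have sub1 : Real.log (m+x+2) - Real.log (m+x) ≤ 2/(m+x) := by
    rw [← Real.log_div (by positivity) (by positivity)]
    have := Real.log_le_sub_one_of_pos (show (0:ℝ) < (m+x+2)/(m+x) by positivity)
    have e : (m+x+2)/(m+x) - 1 = 2/(m+x) := by field_simp; ring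
    linarith
  have sub2 : Real.log (m+x+2) - Real.log (m+x+1) ≤ 1/(δ+1) := by
    rw [← Real.log_div (by positivity) (by positivity)]
    have := Real.log_le_sub_one_of_pos (show (0:ℝ) < (m+x+2)/(m+x+1) by positivity)
    have e : (m+x+2)/(m+x+1) - 1 = 1/(m+x+1) := by field_simp; norm_num
    have e2 : 1/(m+x+1) ≤ 1/(δ+1) := by
      apply one_div_le_one_div_of_le (by linarith) (by linarith)
    linarith
  have claim1 : ((m+x+2)*Real.log (m+x+2) - (m+x)*Real.log (m+x))/2 - Real.log (m+x+1)
      ≤ 1 + 1/(δ+1) := by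
    have hmul := mul_le_mul_of_nonneg_left sub1 (show (0:ℝ) ≤ (m+x)/2 by positivity)
    have e : (m+x)/2 * (2/(m+x)) = 1 := by field_simp
    nlinarith [hmul, sub2]
  -- claim 2
  have claim2 : 1 - 1/(2*m) ≤ m*(Real.log (m+1) - Real.log m) := by
    have e : Real.log (m+1) - Real.log m = Real.log (1 + 1/m) := by
      rw [← Real.log_div (by positivity) (by positivity)]
      congr 1
      field_simp
    have hl := log_one_add_lb (show (0:ℝ) ≤ 1/m by positivity)
    have hmul := mul_le_mul_of_nonneg_left hl (le_of_lt hm0)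
    have e2 : m * (1/m - (1/m)^2/2) = 1 - 1/(2*m) := by field_simp
    rw [e]
    nlinarith [hmul]
  -- identity
  have id1 : psiF (m+1) (x+1) - psiF m x - (Real.log (m+x+1) - Real.log (m+1)) =
      ((m+x+2)*Real.log (m+x+2) - (m+x)*Real.log (m+x))/2 - Real.log (m+x+1)
        - m*(Real.log (m+1) - Real.log m) := by
    simp only [psiF]
    rw [show m+1+(x+1) = m+x+2 by ring, show m+1-(x+1) = m-x by ring,
        show m+x = m+x by rfl]
    ring
  rw [l1]
  linarith [claim1, claim2, id1]
set_option maxHeartbeats 1000000 in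
/-- Corollary 2 (Regret bound for the LEA algorithm based on the `T/2`-shifted
KT potential): the algorithm with per-expert predictions
`w_{t,i} = (∑_{j<t} g̃_{j,i})/(t + T/2) · (1 + ∑_{j<t} g̃_{j,i} w_{j,i})`,
normalized weights `p_t ∝ π_i·[w_{t,i}]₊` (defaulting to `π`), and surrogate
rewards `g̃_{t,i}`, guarantees for every `u` in the simplex
`Regret_T(u) ≤ √(3T·(3 + KL(u‖π)))`. -/
theorem stmt_17 (N T : ℕ) (hN : 2 ≤ N)
    (π : Fin N → ℝ) (hπpos : ∀ i, 0 < π i) (hπsum : ∑ i, π i = 1)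
    (g : ℕ → Fin N → ℝ) (hg : ∀ t i, g t i ∈ Set.Icc (0 : ℝ) 1)
    (gt w p : ℕ → Fin N → ℝ)
    (hw : ∀ t : ℕ, 1 ≤ t → ∀ i, w t i =
      ((∑ j ∈ Finset.Icc 1 (t - 1), gt j i) / ((t : ℝ) + (T : ℝ) / 2)) *
        (1 + ∑ j ∈ Finset.Icc 1 (t - 1), gt j i * w j i))
    (hp : ∀ t : ℕ, 1 ≤ t → p t =
      if 0 < ∑ i, π i * max (w t i) 0 then
        (fun i => π i * max (w t i) 0 / ∑ j, π j * max (w t j) 0)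
      else π)
    (hgt : ∀ t : ℕ, 1 ≤ t → ∀ i, gt t i =
      if 0 < w t i then g t i - ∑ j, g t j * p t j
      else max (g t i - ∑ j, g t j * p t j) 0)
    (u : Fin N → ℝ) (hu_nonneg : ∀ i, 0 ≤ u i) (hu_sum : ∑ i, u i = 1) :
    ∑ t ∈ Finset.Icc 1 T, ∑ i, g t i * (u i - p t i) ≤
      Real.sqrt (3 * (T : ℝ) * (3 + ∑ i, u i * Real.log (u i / π i))) := by
  classical
  rcases Nat.eq_zero_or_pos T with hT0 | hT1
  · subst hT0
    rw [show Finset.Icc 1 0 = (∅ : Finset ℕ) from Finset.Icc_eq_empty (by norm_num),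
      Finset.sum_empty]
    exact Real.sqrt_nonneg _
  have hT1' : (1:ℝ) ≤ (T:ℝ) := by exact_mod_cast hT1
  have hTpos : (0:ℝ) < (T:ℝ) := by linarith
  set δ : ℝ := (T:ℝ)/2 with hδdef
  have hδ0 : 0 < δ := by rw [hδdef]; linarith
  clear_value δ
  -- basic facts about p
  have hp_nonneg : ∀ t, 1 ≤ t → ∀ i, 0 ≤ p t i := by
    intro t ht i
    rw [hp t ht]
    split_ifs with h
    · exact div_nonneg (mul_nonneg (hπpos i).le (le_max_right _ _)) h.le
    · exact (hπpos i).le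
  have hp_sum : ∀ t, 1 ≤ t → ∑ i, p t i = 1 := by
    intro t ht
    rw [hp t ht]
    split_ifs with h
    · rw [← Finset.sum_div, div_self (ne_of_gt h)]
    · exact hπsum
  have hgp_mem : ∀ t, 1 ≤ t →
      0 ≤ (∑ j, g t j * p t j) ∧ (∑ j, g t j * p t j) ≤ 1 := by
    intro t ht
    constructor
    · exact Finset.sum_nonneg fun j _ => mul_nonneg (hg t j).1 (hp_nonneg t ht j)
    · calc ∑ j, g t j * p t j ≤ ∑ j, p t j :=
            Finset.sum_le_sum fun j _ => mul_le_of_le_one_left (hp_nonneg t ht j) (hg t j).2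
        _ = 1 := hp_sum t ht
  have hgt_ge : ∀ t, 1 ≤ t → ∀ i,
      g t i - (∑ j, g t j * p t j) ≤ gt t i := by
    intro t ht i
    rw [hgt t ht i]
    split_ifs
    · exact le_refl _
    · exact le_max_left _ _
  have hgt_abs : ∀ t, 1 ≤ t → ∀ i, |gt t i| ≤ 1 := by
    intro t ht i
    obtain ⟨h0, h1⟩ := hgp_mem t ht
    have hgi := hg t i
    obtain ⟨hgi1, hgi2⟩ := hgi
    rw [hgt t ht i, abs_le]
    split_ifs with hcond
    · constructor
      · linarith
      · linarith
    · constructor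
      · linarith [le_max_right (g t i - ∑ j, g t j * p t j) (0:ℝ)]
      · apply max_le
        · linarith
        · linarith
  -- cumulative quantities
  obtain ⟨S, hSdef⟩ : ∃ S : ℕ → Fin N → ℝ,
      S = fun t i => ∑ j ∈ Finset.Icc 1 t, gt j i := ⟨_, rfl⟩
  obtain ⟨Wl, hWdef⟩ : ∃ Wl : ℕ → Fin N → ℝ,
      Wl = fun t i => 1 + ∑ j ∈ Finset.Icc 1 t, gt j i * w j i := ⟨_, rfl⟩
  have hS0 : ∀ i, S 0 i = 0 := by
    intro i; rw [hSdef]; simp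
  have hSsucc : ∀ (t : ℕ) i, S (t+1) i = S t i + gt (t+1) i := by
    intro t i
    rw [hSdef]
    exact Finset.sum_Icc_succ_top (by omega) _
  have hW0 : ∀ i, Wl 0 i = 1 := by
    intro i; rw [hWdef]; simp
  have hWadd : ∀ (t : ℕ) i, Wl (t+1) i = Wl t i + gt (t+1) i * w (t+1) i := by
    intro t i
    rw [hWdef]
    simp only
    rw [Finset.sum_Icc_succ_top (by omega)]
    ring
  have hSabs : ∀ (t : ℕ) i, |S t i| ≤ (t:ℝ) := by
    intro t
    induction t with
    | zero => intro i; rw [hS0]; simp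
    | succ n ih =>
      intro i
      rw [hSsucc]
      calc |S n i + gt (n+1) i| ≤ |S n i| + |gt (n+1) i| := abs_add_le _ _
        _ ≤ (n:ℝ) + 1 := add_le_add (ih i) (hgt_abs (n+1) (by omega) i)
        _ = ((n+1 : ℕ) : ℝ) := by push_cast; ring
  have hWrec : ∀ (t : ℕ) i,
      Wl (t+1) i = Wl t i * (1 + gt (t+1) i * (S t i / (((t:ℝ)+1) + δ))) := by
    intro t i
    have hw' := hw (t+1) (by omega) i
    simp only [Nat.add_sub_cancel] at hw'
    rw [hWadd t i]
    push_cast at hw'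
    have e1 : (∑ j ∈ Finset.Icc 1 t, gt j i) = S t i := by simp only [hSdef]
    have e2 : (1 + ∑ j ∈ Finset.Icc 1 t, gt j i * w j i) = Wl t i := by simp only [hWdef]
    rw [e1, e2] at hw'
    rw [hw']
    ring
  -- the total wealth is non-increasing
  have hWneg : ∀ t, 1 ≤ t → (∑ i, π i * (gt t i * w t i)) ≤ 0 := by
    intro t ht
    have hpt' := hp t ht
    have hZ0 : 0 ≤ ∑ i, π i * max (w t i) 0 :=
      Finset.sum_nonneg fun i _ => mul_nonneg (hπpos i).le (le_max_right _ _)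
    by_cases hZ : 0 < ∑ i, π i * max (w t i) 0
    · rw [if_pos hZ] at hpt'
      have key : ∀ i, π i * (gt t i * w t i) ≤
          (π i * max (w t i) 0) * (g t i - ∑ j, g t j * p t j) := by
        intro i
        rw [hgt t ht i]
        by_cases hwi : 0 < w t i
        · rw [if_pos hwi, max_eq_left hwi.le]
          exact le_of_eq (by ring)
        · rw [if_neg hwi, max_eq_right (not_lt.1 hwi)]
          have h1 : 0 ≤ max (g t i - ∑ j, g t j * p t j) 0 := le_max_right _ _
          have h2 : w t i ≤ 0 := not_lt.1 hwi
          have h3 : 0 < π i := hπpos i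
          have h4 : max (g t i - ∑ j, g t j * p t j) 0 * w t i ≤ 0 :=
            mul_nonpos_iff.2 (Or.inl ⟨h1, h2⟩)
          have h5 : π i * (max (g t i - ∑ j, g t j * p t j) 0 * w t i) ≤ 0 :=
            mul_nonpos_iff.2 (Or.inl ⟨h3.le, h4⟩)
          have h6 : π i * 0 * (g t i - ∑ j, g t j * p t j) = 0 := by ring
          linarith
      have hZne : (∑ j, π j * max (w t j) 0) ≠ 0 := ne_of_gt hZ
      have hsum1 : ∑ i, (π i * max (w t i) 0) * (g t i - ∑ j, g t j * p t j) = 0 := by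
        have e : ∀ i, (π i * max (w t i) 0) =
            (∑ j, π j * max (w t j) 0) * p t i := by
          intro i
          rw [hpt']
          simp only
          field_simp
        calc ∑ i, (π i * max (w t i) 0) * (g t i - ∑ j, g t j * p t j)
            = ∑ i, ((∑ j, π j * max (w t j) 0) * (g t i * p t i)
                - ((∑ j, π j * max (w t j) 0) * (∑ j, g t j * p t j)) * p t i) := by
              apply Finset.sum_congr rfl
              intro i _
              rw [e i]; ring
          _ = (∑ j, π j * max (w t j) 0) * (∑ i, g t i * p t i)
                - ((∑ j, π j * max (w t j) 0) * (∑ j, g t j * p t j)) * (∑ i, p t i) := by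
              rw [Finset.sum_sub_distrib, ← Finset.mul_sum, ← Finset.mul_sum]
          _ = 0 := by rw [hp_sum t ht]; ring
      calc (∑ i, π i * (gt t i * w t i))
          ≤ ∑ i, (π i * max (w t i) 0) * (g t i - ∑ j, g t j * p t j) :=
            Finset.sum_le_sum fun i _ => key i
        _ = 0 := hsum1
    · have hZe : (∑ i, π i * max (w t i) 0) = 0 := le_antisymm (not_lt.1 hZ) hZ0
      have hwle : ∀ i, w t i ≤ 0 := by
        intro i
        have hterm := (Finset.sum_eq_zero_iff_of_nonneg
          (fun i _ => mul_nonneg (hπpos i).le (le_max_right (w t i) 0))).1 hZe i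
          (Finset.mem_univ i)
        have hmax : max (w t i) 0 = 0 := by
          rcases mul_eq_zero.1 hterm with h | h
          · exact absurd h (ne_of_gt (hπpos i))
          · exact h
        calc w t i ≤ max (w t i) 0 := le_max_left _ _
          _ = 0 := hmax
      apply Finset.sum_nonpos
      intro i _
      rw [hgt t ht i, if_neg (not_lt.2 (hwle i))]
      have h1 : 0 ≤ max (g t i - ∑ j, g t j * p t j) 0 := le_max_right _ _
      have h3 : 0 < π i := hπpos i
      have h4 : max (g t i - ∑ j, g t j * p t j) 0 * w t i ≤ 0 :=
        mul_nonpos_iff.2 (Or.inl ⟨h1, hwle i⟩)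
      exact mul_nonpos_iff.2 (Or.inl ⟨h3.le, h4⟩)
  have hWsum : ∀ t : ℕ, (∑ i, π i * Wl t i) ≤ 1 := by
    intro t
    induction t with
    | zero =>
      have e : ∑ i, π i * Wl 0 i = 1 := by
        rw [← hπsum]
        apply Finset.sum_congr rfl
        intro i _
        rw [hW0 i, mul_one]
      exact le_of_eq e
    | succ n ih =>
      have e : ∑ i, π i * Wl (n+1) i
          = (∑ i, π i * Wl n i) + ∑ i, π i * (gt (n+1) i * w (n+1) i) := by
        rw [← Finset.sum_add_distrib]
        apply Finset.sum_congr rfl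
        intro i _
        rw [hWadd n i]; ring
      rw [e]
      have := hWneg (n+1) (by omega)
      linarith
  -- the defect budget
  obtain ⟨C, hCdef⟩ : ∃ C : ℕ → ℝ,
      C = fun t : ℕ => ∑ j ∈ Finset.Icc 1 t, (1/(δ+1) + 1/(2*((j:ℝ) - 1 + δ))) := ⟨_, rfl⟩
  have hC0 : C 0 = 0 := by simp only [hCdef]; simp
  have hCsucc : ∀ t : ℕ, C (t+1) = C t + (1/(δ+1) + 1/(2*((t:ℝ) + δ))) := by
    intro t
    simp only [hCdef]
    rw [Finset.sum_Icc_succ_top (by omega)]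
    push_cast
    ring
  have hCle : ∀ t : ℕ, 1 ≤ t →
      C t ≤ (t:ℝ)/(δ+1) + 1/(2*δ) + (Real.log ((t:ℝ)-1+δ) - Real.log δ)/2 := by
    intro t ht
    induction t with
    | zero => omega
    | succ n ih =>
      rcases Nat.eq_zero_or_pos n with h0 | hn1
      · subst h0
        rw [hCsucc 0, hC0]
        push_cast
        have e3 : Real.log (1-1+δ) = Real.log δ := by norm_num
        rw [e3]
        norm_num
      · have ih' := ih hn1
        rw [hCsucc n]
        have hn1' : (1:ℝ) ≤ (n:ℝ) := by exact_mod_cast hn1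
        have hpos1 : 0 < (n:ℝ)-1+δ := by linarith
        have hpos2 : 0 < (n:ℝ)+δ := by linarith
        have hlog : 1/(2*((n:ℝ)+δ)) ≤ (Real.log ((n:ℝ)+δ) - Real.log ((n:ℝ)-1+δ))/2 := by
          have h1 := Real.log_le_sub_one_of_pos (show 0 < ((n:ℝ)-1+δ)/((n:ℝ)+δ) by positivity)
          rw [Real.log_div hpos1.ne' hpos2.ne'] at h1
          have e : ((n:ℝ)-1+δ)/((n:ℝ)+δ) - 1 = -(1/((n:ℝ)+δ)) := by
            field_simp
            ring
          rw [e] at h1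
          have eA : 1/(2*((n:ℝ)+δ)) = (1/((n:ℝ)+δ))/2 := by rw [div_div]; congr 1; ring
          linarith [h1, eA]
        push_cast
        have e2 : (n:ℝ)+1-1+δ = (n:ℝ)+δ := by ring
        rw [e2]
        have esplit : ((n:ℝ)+1)/(δ+1) = (n:ℝ)/(δ+1) + 1/(δ+1) := by ring
        linarith [ih', hlog, esplit]
  have hCT : C T ≤ 3 := by
    have h := hCle T hT1
    have hpos : 0 < (T:ℝ)-1+δ := by linarith
    have hlog2 : Real.log ((T:ℝ)-1+δ) - Real.log δ ≤ ((T:ℝ)-1)/δ := by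
      have h1 := Real.log_le_sub_one_of_pos (show 0 < ((T:ℝ)-1+δ)/δ by positivity)
      rw [Real.log_div hpos.ne' hδ0.ne'] at h1
      have e : ((T:ℝ)-1+δ)/δ - 1 = ((T:ℝ)-1)/δ := by field_simp; ring
      linarith
    have h1 : (T:ℝ)/(δ+1) ≤ 2 := by
      rw [div_le_iff₀ (by linarith)]
      rw [hδdef]
      linarith
    have h2 : 1/(2*δ) + (((T:ℝ)-1)/δ)/2 = 1 := by
      rw [hδdef]
      field_simp
      ring
    linarith [h, hlog2, h1, h2]
  -- main induction : wealth dominates potential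
  have hmain : ∀ t : ℕ, ∀ i,
      Real.exp (-(C t)) * Real.exp (psiF ((t:ℝ)+δ) (S t i)) ≤ Wl t i := by
    intro t
    induction t with
    | zero =>
      intro i
      rw [hS0 i, hW0 i, hC0]
      rw [show ((0:ℕ):ℝ)+δ = δ by push_cast; ring, psiF_zero]
      simp
    | succ t ih =>
      intro i
      have hb := hgt_abs (t+1) (by omega) i
      obtain ⟨hb1, hb2⟩ := abs_le.1 hb
      have hx : |S t i| ≤ (t:ℝ) := hSabs t i
      obtain ⟨hx1, hx2⟩ := abs_le.1 hx
      have htn : (0:ℝ) ≤ (t:ℝ) := Nat.cast_nonneg t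
      have hm0 : 0 < (t:ℝ)+δ := by linarith
      have hδm : δ ≤ (t:ℝ)+δ := by linarith
      have hxm : |S t i| ≤ ((t:ℝ)+δ) - δ := by
        simpa using hx
      have hstep1 := psiF_step hδ0 hδm hxm
      have hstep2 : psiF ((t:ℝ)+δ+1) (S t i - 1) ≤ psiF ((t:ℝ)+δ) (S t i)
          + Real.log (((t:ℝ)+δ+1 - S t i)/((t:ℝ)+δ+1)) + (1/(δ+1) + 1/(2*((t:ℝ)+δ))) := by
        have h2 := psiF_step hδ0 hδm (x := -(S t i)) (by rwa [abs_neg])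
        rw [show -(S t i) + 1 = -(S t i - 1) by ring] at h2
        simp only [psiF_even] at h2
        rw [show (t:ℝ)+δ+1 + -(S t i) = (t:ℝ)+δ+1 - S t i by ring] at h2
        exact h2
      have hchord := psiF_chord (n := (t:ℝ)+δ+1) (x := S t i) (gl := gt (t+1) i)
        (by linarith) (by linarith) hb
      have hlam : (0:ℝ) ≤ (1 - gt (t+1) i)/2 := by linarith
      have hmu : (0:ℝ) ≤ (1 + gt (t+1) i)/2 := by linarith
      have hexp : Real.exp ((1 - gt (t+1) i)/2 * psiF ((t:ℝ)+δ+1) (S t i - 1)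
            + (1 + gt (t+1) i)/2 * psiF ((t:ℝ)+δ+1) (S t i + 1))
          ≤ (1 - gt (t+1) i)/2 * Real.exp (psiF ((t:ℝ)+δ+1) (S t i - 1))
            + (1 + gt (t+1) i)/2 * Real.exp (psiF ((t:ℝ)+δ+1) (S t i + 1)) := by
        have hcx := convexOn_exp.2 (Set.mem_univ (psiF ((t:ℝ)+δ+1) (S t i - 1)))
          (Set.mem_univ (psiF ((t:ℝ)+δ+1) (S t i + 1))) hlam hmu (by ring)
        simpa [smul_eq_mul] using hcx
      have hden : (0:ℝ) < (t:ℝ)+δ+1 := by linarith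
      have hposA : 0 < ((t:ℝ)+δ+1+ S t i)/((t:ℝ)+δ+1) := div_pos (by linarith) hden
      have hposB : 0 < ((t:ℝ)+δ+1- S t i)/((t:ℝ)+δ+1) := div_pos (by linarith) hden
      have hA : Real.exp (psiF ((t:ℝ)+δ+1) (S t i + 1))
          ≤ Real.exp (psiF ((t:ℝ)+δ) (S t i)) * (((t:ℝ)+δ+1+ S t i)/((t:ℝ)+δ+1))
            * Real.exp (1/(δ+1) + 1/(2*((t:ℝ)+δ))) := by
        have h := Real.exp_le_exp.2 hstep1
        rwa [Real.exp_add, Real.exp_add, Real.exp_log hposA] at h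
      have hB : Real.exp (psiF ((t:ℝ)+δ+1) (S t i - 1))
          ≤ Real.exp (psiF ((t:ℝ)+δ) (S t i)) * (((t:ℝ)+δ+1- S t i)/((t:ℝ)+δ+1))
            * Real.exp (1/(δ+1) + 1/(2*((t:ℝ)+δ))) := by
        have h := Real.exp_le_exp.2 hstep2
        rwa [Real.exp_add, Real.exp_add, Real.exp_log hposB] at h
      have hfactor : (0:ℝ) ≤ 1 + gt (t+1) i * (S t i / ((t:ℝ)+δ+1)) := by
        have habs : |gt (t+1) i * (S t i / ((t:ℝ)+δ+1))| ≤ 1 := by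
          rw [abs_mul, abs_div, abs_of_pos hden]
          have hone : |S t i| / ((t:ℝ)+δ+1) ≤ 1 := by
            rw [div_le_one hden]; linarith
          calc |gt (t+1) i| * (|S t i| / ((t:ℝ)+δ+1)) ≤ 1 * 1 :=
              mul_le_mul hb hone (by positivity) zero_le_one
            _ = 1 := one_mul 1
        linarith [(abs_le.1 habs).1]
      have hWpos : 0 < Wl t i := lt_of_lt_of_le (by positivity) (ih i)
      -- rewrite the goal
      rw [hSsucc t i, hWrec t i, hCsucc t]
      rw [show ((t+1:ℕ):ℝ) = (t:ℝ)+1 by push_cast; ring]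
      rw [show (t:ℝ)+1+δ = (t:ℝ)+δ+1 by ring]
      calc Real.exp (-(C t + (1/(δ+1) + 1/(2*((t:ℝ) + δ)))))
            * Real.exp (psiF ((t:ℝ)+δ+1) (S t i + gt (t+1) i))
          ≤ Real.exp (-(C t + (1/(δ+1) + 1/(2*((t:ℝ) + δ)))))
            * Real.exp ((1 - gt (t+1) i)/2 * psiF ((t:ℝ)+δ+1) (S t i - 1)
              + (1 + gt (t+1) i)/2 * psiF ((t:ℝ)+δ+1) (S t i + 1)) := by
            exact mul_le_mul_of_nonneg_left (Real.exp_le_exp.2 hchord) (Real.exp_nonneg _)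
        _ ≤ Real.exp (-(C t + (1/(δ+1) + 1/(2*((t:ℝ) + δ)))))
            * ((1 - gt (t+1) i)/2 * Real.exp (psiF ((t:ℝ)+δ+1) (S t i - 1))
              + (1 + gt (t+1) i)/2 * Real.exp (psiF ((t:ℝ)+δ+1) (S t i + 1))) := by
            exact mul_le_mul_of_nonneg_left hexp (Real.exp_nonneg _)
        _ ≤ Real.exp (-(C t + (1/(δ+1) + 1/(2*((t:ℝ) + δ)))))
            * ((1 - gt (t+1) i)/2 * (Real.exp (psiF ((t:ℝ)+δ) (S t i))
                  * (((t:ℝ)+δ+1- S t i)/((t:ℝ)+δ+1))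
                  * Real.exp (1/(δ+1) + 1/(2*((t:ℝ)+δ))))
              + (1 + gt (t+1) i)/2 * (Real.exp (psiF ((t:ℝ)+δ) (S t i))
                  * (((t:ℝ)+δ+1+ S t i)/((t:ℝ)+δ+1))
                  * Real.exp (1/(δ+1) + 1/(2*((t:ℝ)+δ))))) := by
            apply mul_le_mul_of_nonneg_left _ (Real.exp_nonneg _)
            exact add_le_add (mul_le_mul_of_nonneg_left hB hlam)
              (mul_le_mul_of_nonneg_left hA hmu)
        _ = Real.exp (-(C t)) * Real.exp (psiF ((t:ℝ)+δ) (S t i))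
            * (1 + gt (t+1) i * (S t i / ((t:ℝ)+δ+1))) := by
            rw [show -(C t + (1/(δ+1) + 1/(2*((t:ℝ) + δ))))
                = -(C t) + -(1/(δ+1) + 1/(2*((t:ℝ) + δ))) by ring]
            rw [Real.exp_add, Real.exp_neg (1/(δ+1) + 1/(2*((t:ℝ) + δ)))]
            field_simp
            ring
        _ ≤ Wl t i * (1 + gt (t+1) i * (S t i / ((t:ℝ)+δ+1))) :=
            mul_le_mul_of_nonneg_right (ih i) hfactor
  -- conclusion
  have hfin1 : (∑ t ∈ Finset.Icc 1 T, ∑ i, g t i * (u i - p t i)) ≤ ∑ i, u i * S T i := by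
    have per_t : ∀ t ∈ Finset.Icc 1 T,
        (∑ i, g t i * (u i - p t i)) ≤ ∑ i, u i * gt t i := by
      intro t htmem
      have ht : 1 ≤ t := (Finset.mem_Icc.1 htmem).1
      have e : (∑ i, g t i * (u i - p t i))
          = ∑ i, u i * (g t i - ∑ j, g t j * p t j) := by
        have l : (∑ i, g t i * (u i - p t i))
            = (∑ i, u i * g t i) - (∑ i, g t i * p t i) := by
          rw [← Finset.sum_sub_distrib]
          apply Finset.sum_congr rfl; intro i _; ring
        have r : (∑ i, u i * (g t i - ∑ j, g t j * p t j))
            = (∑ i, u i * g t i) - (∑ i, u i) * (∑ j, g t j * p t j) := by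
          calc (∑ i, u i * (g t i - ∑ j, g t j * p t j))
              = ∑ i, (u i * g t i - u i * (∑ j, g t j * p t j)) := by
                apply Finset.sum_congr rfl; intro i _; ring
            _ = (∑ i, u i * g t i) - ∑ i, u i * (∑ j, g t j * p t j) :=
                Finset.sum_sub_distrib _ _
            _ = (∑ i, u i * g t i) - (∑ i, u i) * (∑ j, g t j * p t j) := by
                rw [Finset.sum_mul]
        rw [l, r, hu_sum, one_mul]
      rw [e]
      exact Finset.sum_le_sum fun i _ =>
        mul_le_mul_of_nonneg_left (hgt_ge t ht i) (hu_nonneg i)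
    calc (∑ t ∈ Finset.Icc 1 T, ∑ i, g t i * (u i - p t i))
        ≤ ∑ t ∈ Finset.Icc 1 T, ∑ i, u i * gt t i := Finset.sum_le_sum per_t
      _ = ∑ i, u i * S T i := by
          rw [Finset.sum_comm]
          apply Finset.sum_congr rfl
          intro i _
          rw [← Finset.mul_sum]
          simp only [hSdef]
  have hWpos : ∀ i, 0 < Wl T i := fun i => lt_of_lt_of_le (by positivity) (hmain T i)
  have hlogW : ∀ i, (S T i)^2/(3*(T:ℝ)) ≤ Real.log (Wl T i) + 3 := by
    intro i
    have h := hmain T i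
    have hlog := (Real.log_le_log_iff (by positivity) (hWpos i)).2 h
    rw [Real.log_mul (Real.exp_ne_zero _) (Real.exp_ne_zero _),
      Real.log_exp, Real.log_exp] at hlog
    have hq := psiF_quad (show 0 < (T:ℝ)+δ by linarith)
      (show |S T i| < (T:ℝ)+δ by linarith [hSabs T i])
    have e : (S T i)^2/(2*((T:ℝ)+δ)) = (S T i)^2/(3*(T:ℝ)) := by
      rw [hδdef]; ring_nf
    rw [e] at hq
    linarith [hCT]
  have h3T : (0:ℝ) < 3*(T:ℝ) := by linarith
  have hAnn : ∀ i, 0 ≤ Real.log (Wl T i) + 3 := fun i =>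
    le_trans (by positivity) (hlogW i)
  have hSle : ∀ i, S T i ≤ Real.sqrt (3*(T:ℝ)*(Real.log (Wl T i) + 3)) := by
    intro i
    have hA : (S T i)^2 ≤ 3*(T:ℝ)*(Real.log (Wl T i) + 3) := by
      have := (div_le_iff₀ h3T).1 (hlogW i)
      linarith
    calc S T i ≤ |S T i| := le_abs_self _
      _ = Real.sqrt ((S T i)^2) := (Real.sqrt_sq_eq_abs _).symm
      _ ≤ _ := Real.sqrt_le_sqrt hA
  have hlogsum : (∑ i, u i * Real.log (Wl T i)) ≤ ∑ i, u i * Real.log (u i / π i) := by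
    have per : ∀ i, u i * Real.log (Wl T i)
        ≤ u i * Real.log (u i / π i) + (π i * Wl T i - u i) := by
      intro i
      rcases eq_or_lt_of_le (hu_nonneg i) with h0 | hpos
      · rw [← h0]
        have : (0:ℝ) ≤ π i * Wl T i := le_of_lt (mul_pos (hπpos i) (hWpos i))
        simpa using this
      · have hlt : Real.log (Wl T i * π i / u i) ≤ Wl T i * π i / u i - 1 :=
          Real.log_le_sub_one_of_pos (div_pos (mul_pos (hWpos i) (hπpos i)) hpos)
        have e : Real.log (Wl T i * π i / u i)
            = Real.log (Wl T i) - Real.log (u i / π i) := by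
          rw [Real.log_div (mul_pos (hWpos i) (hπpos i)).ne' hpos.ne',
            Real.log_mul (hWpos i).ne' (hπpos i).ne',
            Real.log_div hpos.ne' (hπpos i).ne']
          ring
        rw [e] at hlt
        have hm := mul_le_mul_of_nonneg_left hlt hpos.le
        rw [mul_sub] at hm
        have e2 : u i * (Wl T i * π i / u i - 1) = π i * Wl T i - u i := by
          field_simp
        rw [e2] at hm
        linarith
    calc (∑ i, u i * Real.log (Wl T i))
        ≤ ∑ i, (u i * Real.log (u i / π i) + (π i * Wl T i - u i)) :=
          Finset.sum_le_sum fun i _ => per i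
      _ = (∑ i, u i * Real.log (u i / π i)) + ((∑ i, π i * Wl T i) - ∑ i, u i) := by
          rw [Finset.sum_add_distrib, Finset.sum_sub_distrib]
      _ ≤ _ := by
          have := hWsum T
          rw [hu_sum]
          linarith
  have hCS : (∑ i, u i * Real.sqrt (3*(T:ℝ)*(Real.log (Wl T i) + 3)))
      ≤ Real.sqrt (∑ i, u i * (3*(T:ℝ)*(Real.log (Wl T i) + 3))) := by
    have hsum_nonneg : 0 ≤ ∑ i, u i * Real.sqrt (3*(T:ℝ)*(Real.log (Wl T i) + 3)) :=
      Finset.sum_nonneg fun i _ => mul_nonneg (hu_nonneg i) (Real.sqrt_nonneg _)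
    have hX2 : (∑ i, u i * Real.sqrt (3*(T:ℝ)*(Real.log (Wl T i) + 3)))^2
        ≤ ∑ i, u i * (3*(T:ℝ)*(Real.log (Wl T i) + 3)) := by
      have cs := Finset.sum_mul_sq_le_sq_mul_sq Finset.univ
        (fun i => Real.sqrt (u i))
        (fun i => Real.sqrt (u i) * Real.sqrt (3*(T:ℝ)*(Real.log (Wl T i) + 3)))
      have e1 : ∀ i : Fin N, Real.sqrt (u i)
            * (Real.sqrt (u i) * Real.sqrt (3*(T:ℝ)*(Real.log (Wl T i) + 3)))
          = u i * Real.sqrt (3*(T:ℝ)*(Real.log (Wl T i) + 3)) := fun i => by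
        rw [← mul_assoc, Real.mul_self_sqrt (hu_nonneg i)]
      have e2 : (∑ i, Real.sqrt (u i)^2) = 1 := by
        rw [← hu_sum]
        apply Finset.sum_congr rfl
        intro i _
        exact Real.sq_sqrt (hu_nonneg i)
      have e3 : ∀ i : Fin N, (Real.sqrt (u i) * Real.sqrt (3*(T:ℝ)*(Real.log (Wl T i) + 3)))^2
          = u i * (3*(T:ℝ)*(Real.log (Wl T i) + 3)) := fun i => by
        rw [mul_pow, Real.sq_sqrt (hu_nonneg i),
          Real.sq_sqrt (mul_nonneg h3T.le (hAnn i))]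
      calc (∑ i, u i * Real.sqrt (3*(T:ℝ)*(Real.log (Wl T i) + 3)))^2
          = (∑ i, Real.sqrt (u i)
              * (Real.sqrt (u i) * Real.sqrt (3*(T:ℝ)*(Real.log (Wl T i) + 3))))^2 := by
            rw [Finset.sum_congr rfl (fun i _ => e1 i)]
        _ ≤ (∑ i, Real.sqrt (u i)^2)
              * (∑ i, (Real.sqrt (u i) * Real.sqrt (3*(T:ℝ)*(Real.log (Wl T i) + 3)))^2) := cs
        _ = 1 * ∑ i, u i * (3*(T:ℝ)*(Real.log (Wl T i) + 3)) := by
            rw [e2]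
            congr 1
            exact Finset.sum_congr rfl (fun i _ => e3 i)
        _ = ∑ i, u i * (3*(T:ℝ)*(Real.log (Wl T i) + 3)) := one_mul _
    calc (∑ i, u i * Real.sqrt (3*(T:ℝ)*(Real.log (Wl T i) + 3)))
        = Real.sqrt ((∑ i, u i * Real.sqrt (3*(T:ℝ)*(Real.log (Wl T i) + 3)))^2) :=
          (Real.sqrt_sq hsum_nonneg).symm
      _ ≤ _ := Real.sqrt_le_sqrt hX2
  calc (∑ t ∈ Finset.Icc 1 T, ∑ i, g t i * (u i - p t i))
      ≤ ∑ i, u i * S T i := hfin1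
    _ ≤ ∑ i, u i * Real.sqrt (3*(T:ℝ)*(Real.log (Wl T i) + 3)) :=
        Finset.sum_le_sum fun i _ => mul_le_mul_of_nonneg_left (hSle i) (hu_nonneg i)
    _ ≤ Real.sqrt (∑ i, u i * (3*(T:ℝ)*(Real.log (Wl T i) + 3))) := hCS
    _ ≤ Real.sqrt (3 * (T:ℝ) * (3 + ∑ i, u i * Real.log (u i / π i))) := by
        apply Real.sqrt_le_sqrt
        have e : (∑ i, u i * (3*(T:ℝ)*(Real.log (Wl T i) + 3)))
            = 3*(T:ℝ) * (∑ i, u i * Real.log (Wl T i)) + 9*(T:ℝ) * (∑ i, u i) := by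
          rw [Finset.mul_sum, Finset.mul_sum, ← Finset.sum_add_distrib]
          apply Finset.sum_congr rfl
          intro i _
          ring
        rw [e, hu_sum]
        have hscale := mul_le_mul_of_nonneg_left hlogsum h3T.le
        linarith
end

section
/- Let T ≥ 1 be an integer, ε > 0, and R_T ∈ ℝ. Let g_1, …, g_T ∈ [−1, 1] and set x_t = (1 + g_t)/2 ∈ [0, 1]. Let p_1, …, p_T ∈ (0, 1) be such that Σ_{t=1}^T ℓ(p_t, x_t) − inf_{β ∈ [0,1]} Σ_{t=1}^T ℓ(β, x_t) ≤ R_T, where ℓ(p, x) = −x·ln(p) − (1−x)·ln(1−p) (with the convention 0·ln 0 = 0). Set β_t = 2 p_t − 1. Then ε · Π_{t=1}^T (1 + g_t β_t) ≥ ε · exp( T · KL( 1/2 + (Σ_{t=1}^T g_t)/(2T) ‖ 1/2 ) − R_T ). -/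
/-- Lemma 2 (From log loss to wealth): if the probabilities `p_t ∈ (0,1)`
guarantee log-loss regret at most `R_T` on the outcomes `x_t = (1+g_t)/2`,
then the betting strategy with fractions `β_t = 2p_t - 1` and endowment `ε`
guarantees wealth
`ε·∏_t (1 + g_t β_t) ≥ ε·exp(T·KL(1/2 + (∑_t g_t)/(2T) ‖ 1/2) - R_T)`. -/
theorem stmt_18 (T : ℕ) (hT : 1 ≤ T) (ε : ℝ) (hε : 0 < ε) (R : ℝ)
    (g : ℕ → ℝ) (hg : ∀ t ∈ Finset.Icc 1 T, g t ∈ Set.Icc (-1 : ℝ) 1)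
    (p : ℕ → ℝ) (hp : ∀ t ∈ Finset.Icc 1 T, p t ∈ Set.Ioo (0 : ℝ) 1)
    (hregret :
      (∑ t ∈ Finset.Icc 1 T,
          (-(((1 + g t) / 2) * Real.log (p t)) -
            (1 - (1 + g t) / 2) * Real.log (1 - p t))) -
        (⨅ β : Set.Ioo (0 : ℝ) 1,
          ∑ t ∈ Finset.Icc 1 T,
            (-(((1 + g t) / 2) * Real.log (β : ℝ)) -
              (1 - (1 + g t) / 2) * Real.log (1 - (β : ℝ)))) ≤ R) :
    ε * ∏ t ∈ Finset.Icc 1 T, (1 + g t * (2 * p t - 1)) ≥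
      ε * Real.exp ((T : ℝ) *
        ((1 / 2 + (∑ t ∈ Finset.Icc 1 T, g t) / (2 * T)) *
            Real.log ((1 / 2 + (∑ t ∈ Finset.Icc 1 T, g t) / (2 * T)) / (1 / 2)) +
          (1 - (1 / 2 + (∑ t ∈ Finset.Icc 1 T, g t) / (2 * T))) *
            Real.log ((1 - (1 / 2 + (∑ t ∈ Finset.Icc 1 T, g t) / (2 * T))) / (1 - 1 / 2)))
        - R) := by
  have hT0 : (0:ℝ) < T := by exact_mod_cast Nat.pos_of_ne_zero (by omega)
  set I := Finset.Icc 1 T with hI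
  have hcard : (I.card : ℝ) = T := by simp [hI]
  set S := ∑ t ∈ I, g t with hS
  set xb : ℝ := 1 / 2 + S / (2 * T) with hxb
  -- basic bounds
  have hx0 : ∀ t ∈ I, 0 ≤ (1 + g t) / 2 := fun t ht => by
    have := (hg t ht).1; linarith
  have hx1 : ∀ t ∈ I, (1 + g t) / 2 ≤ 1 := fun t ht => by
    have := (hg t ht).2; linarith
  have hA : ∑ t ∈ I, (1 + g t) / 2 = T * xb := by
    rw [← Finset.sum_div, Finset.sum_add_distrib, Finset.sum_const, nsmul_eq_mul, mul_one,
      hcard, hxb, ← hS]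
    field_simp
  have hxb0 : 0 ≤ xb := by
    have h1 : 0 ≤ ∑ t ∈ I, (1 + g t) / 2 := Finset.sum_nonneg hx0
    rw [hA] at h1
    nlinarith
  have hxb1 : xb ≤ 1 := by
    have h1 : ∑ t ∈ I, (1 + g t) / 2 ≤ ∑ _t ∈ I, (1:ℝ) := Finset.sum_le_sum hx1
    rw [hA, Finset.sum_const, nsmul_eq_mul, mul_one, hcard] at h1
    nlinarith
  -- factor identity and positivity
  have hfac : ∀ t : ℕ, 1 + g t * (2 * p t - 1) =
      2 * (((1 + g t) / 2) * p t + (1 - (1 + g t) / 2) * (1 - p t)) := by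
    intro t; ring
  have hpos : ∀ t ∈ I, 0 < ((1 + g t) / 2) * p t + (1 - (1 + g t) / 2) * (1 - p t) := by
    intro t ht
    obtain ⟨hp1, hp2⟩ := hp t ht
    have h1 := hx0 t ht; have h2 := hx1 t ht
    rcases le_total ((1 + g t) / 2) (1 / 2) with h | h
    · nlinarith
    · nlinarith
  have hfacpos : ∀ t ∈ I, 0 < 1 + g t * (2 * p t - 1) := fun t ht => by
    have := hpos t ht; rw [hfac t]; linarith
  -- key pointwise inequality
  have hkey : ∀ t ∈ I,
      Real.log 2 - (-(((1 + g t) / 2) * Real.log (p t)) -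
          (1 - (1 + g t) / 2) * Real.log (1 - p t))
        ≤ Real.log (1 + g t * (2 * p t - 1)) := by
    intro t ht
    obtain ⟨hp1, hp2⟩ := hp t ht
    have hx0' := hx0 t ht; have hx1' := hx1 t ht
    have h1p : 0 < 1 - p t := by linarith
    have hgm : p t ^ ((1 + g t) / 2) * (1 - p t) ^ (1 - (1 + g t) / 2) ≤
        ((1 + g t) / 2) * p t + (1 - (1 + g t) / 2) * (1 - p t) :=
      Real.geom_mean_le_arith_mean2_weighted hx0' (by linarith) hp1.le h1p.le (by ring)
    have hr1 : (0:ℝ) < p t ^ ((1 + g t) / 2) := Real.rpow_pos_of_pos hp1 _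
    have hr2 : (0:ℝ) < (1 - p t) ^ (1 - (1 + g t) / 2) := Real.rpow_pos_of_pos h1p _
    have hlog := Real.log_le_log (mul_pos hr1 hr2) hgm
    rw [Real.log_mul hr1.ne' hr2.ne', Real.log_rpow hp1, Real.log_rpow h1p] at hlog
    rw [hfac t, Real.log_mul two_ne_zero (hpos t ht).ne']
    linarith
  -- value of the loss at a constant prediction b
  have hFval : ∀ b : ℝ,
      (∑ t ∈ I, (-(((1 + g t) / 2) * Real.log b) -
        (1 - (1 + g t) / 2) * Real.log (1 - b)))
      = (T * xb) * (Real.log (1 - b) - Real.log b) - T * Real.log (1 - b) := by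
    intro b
    have hcg : ∀ t ∈ I, -(((1 + g t) / 2) * Real.log b) -
        (1 - (1 + g t) / 2) * Real.log (1 - b)
        = ((1 + g t) / 2) * (Real.log (1 - b) - Real.log b) - Real.log (1 - b) := by
      intro t _; ring
    rw [Finset.sum_congr rfl hcg, Finset.sum_sub_distrib, ← Finset.sum_mul, hA,
      Finset.sum_const, nsmul_eq_mul, hcard]
  -- the infimum is bounded below
  have hbdd : BddBelow (Set.range fun β : Set.Ioo (0:ℝ) 1 =>
      ∑ t ∈ I, (-(((1 + g t) / 2) * Real.log (β : ℝ)) -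
        (1 - (1 + g t) / 2) * Real.log (1 - (β : ℝ)))) := by
    refine ⟨0, ?_⟩
    rintro y ⟨β, rfl⟩
    obtain ⟨hb0, hb1⟩ := β.2
    refine Finset.sum_nonneg fun t ht => ?_
    have l1 : Real.log (β:ℝ) ≤ 0 := Real.log_nonpos hb0.le hb1.le
    have l2 : Real.log (1 - (β:ℝ)) ≤ 0 := Real.log_nonpos (by linarith) (by linarith)
    have h1 := hx0 t ht; have h2 := hx1 t ht
    nlinarith
  -- bound the infimum by the entropy value
  have hinf : (⨅ β : Set.Ioo (0:ℝ) 1,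
      ∑ t ∈ I, (-(((1 + g t) / 2) * Real.log (β : ℝ)) -
        (1 - (1 + g t) / 2) * Real.log (1 - (β : ℝ))))
      ≤ T * (-(xb * Real.log xb) - (1 - xb) * Real.log (1 - xb)) := by
    rcases eq_or_lt_of_le hxb0 with h0 | h0
    · -- xb = 0
      refine le_of_forall_pos_le_add fun δ hδ => ?_
      have hb : 1 - Real.exp (-(δ / T)) ∈ Set.Ioo (0:ℝ) 1 := by
        constructor
        · have h := div_pos hδ hT0
          have : Real.exp (-(δ / T)) < 1 := Real.exp_lt_one_iff.mpr (by linarith)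
          linarith
        · have : 0 < Real.exp (-(δ / T)) := Real.exp_pos _
          linarith
      refine le_trans (ciInf_le hbdd ⟨_, hb⟩) ?_
      rw [hFval, ← h0]
      have h1 : (1:ℝ) - (1 - Real.exp (-(δ / T))) = Real.exp (-(δ / T)) := by ring
      rw [h1, Real.log_exp]
      have key : ∀ L : ℝ, (T:ℝ) * 0 * (-(δ / ↑T) - L) - ↑T * -(δ / ↑T) = δ := by
        intro L; field_simp; ring
      rw [key]
      norm_num
    rcases eq_or_lt_of_le hxb1 with h1 | h1
    · -- xb = 1
      refine le_of_forall_pos_le_add fun δ hδ => ?_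
      have hd := div_pos hδ hT0
      have hb : Real.exp (-(δ / T)) ∈ Set.Ioo (0:ℝ) 1 :=
        ⟨Real.exp_pos _, Real.exp_lt_one_iff.mpr (by linarith)⟩
      refine le_trans (ciInf_le hbdd ⟨_, hb⟩) ?_
      rw [hFval, Real.log_exp, h1]
      have key : ∀ L : ℝ, (T:ℝ) * 1 * (L - -(δ / ↑T)) - ↑T * L = δ := by
        intro L; field_simp; ring
      rw [key]
      norm_num
    · -- 0 < xb < 1
      refine le_trans (ciInf_le hbdd ⟨xb, h0, h1⟩) ?_
      rw [hFval]
      ring_nf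
      exact le_refl _
  -- product positivity and log of the product
  have hprodpos : 0 < ∏ t ∈ I, (1 + g t * (2 * p t - 1)) :=
    Finset.prod_pos hfacpos
  have hlogprod : Real.log (∏ t ∈ I, (1 + g t * (2 * p t - 1)))
      = ∑ t ∈ I, Real.log (1 + g t * (2 * p t - 1)) :=
    Real.log_prod fun t ht => (hfacpos t ht).ne'
  -- sum the key inequality
  have hsum : (T:ℝ) * Real.log 2 -
      (∑ t ∈ I, (-(((1 + g t) / 2) * Real.log (p t)) -
        (1 - (1 + g t) / 2) * Real.log (1 - p t)))
      ≤ ∑ t ∈ I, Real.log (1 + g t * (2 * p t - 1)) := by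
    have := Finset.sum_le_sum hkey
    rwa [Finset.sum_sub_distrib, Finset.sum_const, nsmul_eq_mul, hcard] at this
  -- KL identity
  have hKL : xb * Real.log (xb / (1 / 2)) + (1 - xb) * Real.log ((1 - xb) / (1 - 1 / 2))
      = Real.log 2 + (xb * Real.log xb + (1 - xb) * Real.log (1 - xb)) := by
    have e1 : xb * Real.log (xb / (1 / 2)) = xb * Real.log 2 + xb * Real.log xb := by
      rcases eq_or_lt_of_le hxb0 with h | h
      · simp [← h]
      · rw [show xb / (1 / 2) = xb * 2 by ring, Real.log_mul h.ne' two_ne_zero]; ring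
    have e2 : (1 - xb) * Real.log ((1 - xb) / (1 - 1 / 2))
        = (1 - xb) * Real.log 2 + (1 - xb) * Real.log (1 - xb) := by
      rcases eq_or_lt_of_le hxb1 with h | h
      · rw [h]; simp
      · have hne : (1:ℝ) - xb ≠ 0 := by intro hc; rw [sub_eq_zero] at hc; exact h.ne hc.symm
        rw [show (1 - xb) / (1 - 1 / 2) = (1 - xb) * 2 by ring,
          Real.log_mul hne two_ne_zero]; ring
    rw [e1, e2]; ring
  -- assemble
  rw [ge_iff_le]
  have hE : (T : ℝ) * (xb * Real.log (xb / (1 / 2)) +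
        (1 - xb) * Real.log ((1 - xb) / (1 - 1 / 2))) - R
      ≤ Real.log (∏ t ∈ I, (1 + g t * (2 * p t - 1))) := by
    have hEeq : (T : ℝ) * (xb * Real.log (xb / (1 / 2)) +
          (1 - xb) * Real.log ((1 - xb) / (1 - 1 / 2))) - R
        = (T:ℝ) * Real.log 2 -
          (T:ℝ) * (-(xb * Real.log xb) - (1 - xb) * Real.log (1 - xb)) - R := by
      rw [hKL]; ring
    rw [hEeq, hlogprod]
    have h4 := sub_le_iff_le_add.mp hregret
    have h5 := h4.trans (add_le_add_right hinf R)
    have h6 := sub_le_sub_left h5 ((T:ℝ) * Real.log 2)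
    exact le_trans (le_of_eq (by ring)) (h6.trans hsum)
  have := (Real.exp_le_exp.mpr hE).trans_eq (Real.exp_log hprodpos)
  exact mul_le_mul_of_nonneg_left this hε.le
end

section
/- Let N ≥ 2 be an integer, π ∈ Δ_N with π_i > 0 for all i, w ∈ ℝ^N, and g ∈ [0,1]^N. Define p̂_i = π_i · max(w_i, 0), let p = p̂/‖p̂‖₁ if ‖p̂‖₁ > 0 and p = π otherwise, and define g̃_i = g_i − ⟨g, p⟩ if w_i > 0 and g̃_i = max(g_i − ⟨g, p⟩, 0) if w_i ≤ 0. Then Σ_{i=1}^N π_i · g̃_i · w_i ≤ 0. -/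
/-- The key per-round inequality in the reduction from learning with expert
advice to coin betting: with `p̂_i = π_i·[w_i]₊`, `p = p̂/‖p̂‖₁` (or `π` when
`p̂ = 0`), and surrogate rewards `g̃_i`, the prior-weighted sum
`∑_i π_i·g̃_i·w_i` is non-positive. -/
theorem stmt_19 (N : ℕ) (hN : 2 ≤ N)
    (π : Fin N → ℝ) (hπpos : ∀ i, 0 < π i) (hπsum : ∑ i, π i = 1)
    (w : Fin N → ℝ) (g : Fin N → ℝ) (hg : ∀ i, g i ∈ Set.Icc (0 : ℝ) 1)
    (phat : Fin N → ℝ) (hphat : ∀ i, phat i = π i * max (w i) 0)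
    (p : Fin N → ℝ)
    (hp : p = if 0 < ∑ i, phat i then (fun i => phat i / ∑ j, phat j) else π)
    (gt : Fin N → ℝ)
    (hgt : ∀ i, gt i =
      if 0 < w i then g i - ∑ j, g j * p j
      else max (g i - ∑ j, g j * p j) 0) :
    ∑ i, π i * gt i * w i ≤ 0 := by
  set G := ∑ j, g j * p j with hG
  have hphatnn : ∀ i, 0 ≤ phat i := fun i => by
    rw [hphat]; exact mul_nonneg (hπpos i).le (le_max_right _ _)
  have step1 : ∀ i ∈ Finset.univ, π i * gt i * w i ≤ phat i * (g i - G) := by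
    intro i _
    by_cases hw : 0 < w i
    · rw [hgt i, if_pos hw, hphat i, max_eq_left hw.le]; ring_nf; exact le_refl _
    · push_neg at hw
      have h1 : π i * gt i * w i ≤ 0 := by
        apply mul_nonpos_of_nonneg_of_nonpos _ hw
        exact mul_nonneg (hπpos i).le (by rw [hgt i, if_neg (not_lt.mpr hw)]; exact le_max_right _ _)
      have h2 : phat i = 0 := by rw [hphat i, max_eq_right hw]; ring
      rw [h2]; simpa using h1
  refine (Finset.sum_le_sum step1).trans ?_
  rcases (Finset.sum_nonneg (fun i _ => hphatnn i)).lt_or_eq with hS | hS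
  · have hpdef : p = fun i => phat i / ∑ j, phat j := by rw [hp, if_pos hS]
    have hGn : G = (∑ j, g j * phat j) / ∑ j, phat j := by
      rw [hG, hpdef, Finset.sum_div]
      apply Finset.sum_congr rfl; intro j _; simp; ring
    have : ∑ i, phat i * (g i - G) = (∑ i, g i * phat i) - G * ∑ i, phat i := by
      rw [Finset.mul_sum, ← Finset.sum_sub_distrib]
      apply Finset.sum_congr rfl; intro i _; ring
    rw [this, hGn, div_mul_cancel₀ _ hS.ne', sub_self]
  · have hz : ∀ i ∈ Finset.univ, phat i = 0 :=
      (Finset.sum_eq_zero_iff_of_nonneg (fun i _ => hphatnn i)).mp hS.symm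
    apply le_of_eq
    apply Finset.sum_eq_zero
    intro i hi; rw [hz i hi, zero_mul]
end
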